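/- arXiv:1808.01197 — 6 statements merged into one kernel-verified Lean document; each statement's English description precedes it below -/
import Mathlib

section
/- If f : ℝ → E is almost periodic and f' exists and is uniformly continuous on ℝ, then f' is almost periodic. -/
def AlmostPeriodic {E : Type*} [NormedAddCommGroup E] (f : ℝ → E) : Prop :=
  Continuous f ∧ ∀ ε > (0:ℝ), ∃ l > (0:ℝ), ∀ a : ℝ, ∃ τ ∈ Set.Icc a (a + l),
    ∀ t : ℝ, ‖f (t + τ) - f t‖ ≤ ε

/-- If `f` is almost periodic, differentiable with derivative `f'`, and `f'` is uniformly
continuous, then `f'` is almost periodic. -/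
theorem stmt5 {E : Type*} [NormedAddCommGroup E] [NormedSpace ℝ E] [CompleteSpace E]
    (f f' : ℝ → E) (hf : AlmostPeriodic f) (hderiv : ∀ t : ℝ, HasDerivAt f (f' t) t)
    (huc : UniformContinuous f') : AlmostPeriodic f' := by
  refine ⟨huc.continuous, ?_⟩
  intro ε hε
  obtain ⟨δ, hδ, hδ'⟩ := Metric.uniformContinuous_iff.1 huc (ε/3) (by linarith)
  set h : ℝ := min (δ/2) 1 with hh
  have hh0 : 0 < h := lt_min (by linarith) one_pos
  have hhδ : h < δ := lt_of_le_of_lt (min_le_left _ _) (by linarith)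
  -- MVT estimate: difference quotient is within ε/3 of f'
  have key : ∀ t : ℝ, ‖f (t + h) - f t - h • f' t‖ ≤ ε / 3 * h := by
    intro t
    have hmem1 : t ∈ Set.Icc t (t + h) := ⟨le_refl _, by linarith⟩
    have hmem2 : t + h ∈ Set.Icc t (t + h) := ⟨by linarith, le_refl _⟩
    have hd : ∀ x ∈ Set.Icc t (t + h),
        HasDerivWithinAt (fun x => f x - x • f' t) (f' x - f' t) (Set.Icc t (t + h)) x := by
      intro x _
      have : HasDerivAt (fun x => f x - x • f' t) (f' x - (1:ℝ) • f' t) x :=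
        (hderiv x).sub ((hasDerivAt_id x).smul_const (f' t))
      simpa using this.hasDerivWithinAt
    have hbound : ∀ x ∈ Set.Icc t (t + h), ‖f' x - f' t‖ ≤ ε / 3 := by
      intro x hx
      have hdist : dist x t < δ := by
        rw [Real.dist_eq, abs_of_nonneg (by linarith [hx.1])]
        linarith [hx.2]
      have := hδ' hdist
      rw [dist_eq_norm] at this
      linarith
    have := (convex_Icc t (t + h)).norm_image_sub_le_of_norm_hasDerivWithin_le
      hd hbound hmem1 hmem2
    have heq : f (t + h) - (t + h) • f' t - (f t - t • f' t) = f (t + h) - f t - h • f' t := by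
      rw [add_smul]; abel
    rw [heq] at this
    calc ‖f (t + h) - f t - h • f' t‖ ≤ ε / 3 * ‖t + h - t‖ := this
      _ = ε / 3 * h := by rw [show t + h - t = h by ring, Real.norm_eq_abs, abs_of_pos hh0]
  obtain ⟨l, hl, hper⟩ := hf.2 (ε * h / 6) (by positivity)
  refine ⟨l, hl, fun a => ?_⟩
  obtain ⟨τ, hτ, hτ'⟩ := hper a
  refine ⟨τ, hτ, fun t => ?_⟩
  -- D u = h⁻¹ • (f (u+h) - f u)
  have approx : ∀ u : ℝ, ‖f' u - h⁻¹ • (f (u + h) - f u)‖ ≤ ε / 3 := by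
    intro u
    have : f' u - h⁻¹ • (f (u + h) - f u) = (-h⁻¹) • (f (u + h) - f u - h • f' u) := by
      have hne : h ≠ 0 := ne_of_gt hh0
      match_scalars <;> field_simp
    rw [this, norm_smul, norm_neg, Real.norm_eq_abs, abs_of_pos (inv_pos.2 hh0)]
    calc h⁻¹ * ‖f (u + h) - f u - h • f' u‖ ≤ h⁻¹ * (ε / 3 * h) :=
          mul_le_mul_of_nonneg_left (key u) (le_of_lt (inv_pos.2 hh0))
      _ = ε / 3 := by field_simp
  have shift : ‖h⁻¹ • (f (t + τ + h) - f (t + τ)) - h⁻¹ • (f (t + h) - f t)‖ ≤ ε / 3 := by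
    rw [← smul_sub, norm_smul, Real.norm_eq_abs, abs_of_pos (inv_pos.2 hh0)]
    have e1 : ‖f (t + τ + h) - f (t + h)‖ ≤ ε * h / 6 := by
      have := hτ' (t + h)
      rwa [show t + h + τ = t + τ + h by ring] at this
    have e2 : ‖f (t + τ) - f t‖ ≤ ε * h / 6 := hτ' t
    have tri : ‖f (t + τ + h) - f (t + τ) - (f (t + h) - f t)‖ ≤
        ‖f (t + τ + h) - f (t + h)‖ + ‖f (t + τ) - f t‖ := by
      have : f (t + τ + h) - f (t + τ) - (f (t + h) - f t) =
          (f (t + τ + h) - f (t + h)) - (f (t + τ) - f t) := by abel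
      rw [this]; exact norm_sub_le _ _
    calc h⁻¹ * ‖f (t + τ + h) - f (t + τ) - (f (t + h) - f t)‖
        ≤ h⁻¹ * (ε * h / 6 + ε * h / 6) :=
          mul_le_mul_of_nonneg_left (tri.trans (by linarith)) (le_of_lt (inv_pos.2 hh0))
      _ = ε / 3 := by field_simp; ring
  have tri2 : ‖f' (t + τ) - f' t‖ ≤
      ‖f' (t + τ) - h⁻¹ • (f (t + τ + h) - f (t + τ))‖ +
      ‖h⁻¹ • (f (t + τ + h) - f (t + τ)) - h⁻¹ • (f (t + h) - f t)‖ +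
      ‖f' t - h⁻¹ • (f (t + h) - f t)‖ := by
    have := norm_add₃_le (a := f' (t + τ) - h⁻¹ • (f (t + τ + h) - f (t + τ)))
      (b := h⁻¹ • (f (t + τ + h) - f (t + τ)) - h⁻¹ • (f (t + h) - f t))
      (c := h⁻¹ • (f (t + h) - f t) - f' t)
    simpa [norm_sub_rev (f' t)] using this.trans_eq' (by abel_nf)
  linarith [approx (t + τ), approx t, shift, tri2]
end

section
/- For every continuous almost periodic f : ℝ → E into a Banach space E and every r ∈ ℝ, the Bohr transform P_r(f) = lim_{t→∞} (1/t) ∫₀ᵗ e^{−irs} f(s) ds exists. Moreover, for every α ∈ ℝ, P_r(f) = lim_{t→∞} (1/t) ∫_α^{t+α} e^{−irs} f(s) ds. -/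
open Filter Topology

theorem ap_bounded {E : Type*} [NormedAddCommGroup E] {f : ℝ → E} (hf : AlmostPeriodic f) :
    ∃ C : ℝ, 0 ≤ C ∧ ∀ t, ‖f t‖ ≤ C := by
  obtain ⟨hc, hap⟩ := hf
  obtain ⟨l, hl, hper⟩ := hap 1 one_pos
  obtain ⟨C0, hC0⟩ := (isCompact_Icc (a := (0:ℝ)) (b := l)).exists_bound_of_continuousOn
    hc.continuousOn
  refine ⟨C0 + 1, ?_, ?_⟩
  · have := hC0 0 ⟨le_refl _, hl.le⟩
    have := norm_nonneg (f 0)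
    linarith
  · intro t
    obtain ⟨τ, ⟨hτ1, hτ2⟩, hτ⟩ := hper (-t)
    have h1 : ‖f (t + τ) - f t‖ ≤ 1 := hτ t
    have h2 : ‖f (t + τ)‖ ≤ C0 := hC0 (t + τ) ⟨by linarith, by linarith⟩
    have := norm_sub_norm_le (f (t+τ)) (f t)
    have := abs_le.1 (abs_norm_sub_norm_le (f (t+τ)) (f t))
    linarith [h1, this.1]

theorem ap_unif {E : Type*} [NormedAddCommGroup E] {f : ℝ → E} (hf : AlmostPeriodic f) :
    ∀ ε > (0:ℝ), ∃ δ > (0:ℝ), ∀ x y : ℝ, |x - y| ≤ δ → ‖f x - f y‖ ≤ ε := by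
  intro ε hε
  obtain ⟨hc, hap⟩ := hf
  obtain ⟨l, hl, hper⟩ := hap (ε/3) (by linarith)
  have hucont : UniformContinuousOn f (Set.Icc (-1) (l+1)) :=
    isCompact_Icc.uniformContinuousOn_of_continuous hc.continuousOn
  rw [Metric.uniformContinuousOn_iff] at hucont
  obtain ⟨δ0, hδ0, hδ⟩ := hucont (ε/3) (by linarith)
  refine ⟨min (δ0/2) 1, by positivity, fun x y hxy => ?_⟩
  obtain ⟨τ, ⟨hτ1, hτ2⟩, hτ⟩ := hper (-x)
  have hx : x + τ ∈ Set.Icc (-1 : ℝ) (l+1) := ⟨by linarith, by linarith⟩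
  have hxy1 : |x - y| ≤ 1 := le_trans hxy (min_le_right _ _)
  have hxy2 : |x - y| ≤ δ0/2 := le_trans hxy (min_le_left _ _)
  have hy : y + τ ∈ Set.Icc (-1 : ℝ) (l+1) := by
    have := abs_le.1 hxy1
    constructor <;> [linarith [this.2]; linarith [this.1]]
  have hmid : ‖f (x + τ) - f (y + τ)‖ ≤ ε/3 := by
    have : dist (x + τ) (y + τ) < δ0 := by
      rw [Real.dist_eq]
      have : x + τ - (y + τ) = x - y := by ring
      rw [this]; linarith
    have := hδ (x+τ) hx (y+τ) hy this
    rw [dist_eq_norm] at this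
    linarith
  calc ‖f x - f y‖ = ‖(f x - f (x+τ)) + (f (x+τ) - f (y+τ)) + (f (y+τ) - f y)‖ := by abel_nf
    _ ≤ ‖f x - f (x+τ)‖ + ‖f (x+τ) - f (y+τ)‖ + ‖f (y+τ) - f y‖ := by
        exact le_trans (norm_add_le _ _) (by gcongr; exact norm_add_le _ _)
    _ ≤ ε/3 + ε/3 + ε/3 := by
        gcongr <;> first
          | (rw [norm_sub_rev]; exact hτ x)
          | exact hmid
          | exact hτ y
    _ = ε := by ring

-- phase rewrite via fractional part
theorem exp_fract (r x : ℝ) :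
    Complex.exp (-(Complex.I * r * x))
      = Complex.exp (-(2 * Real.pi * Complex.I) * (Int.fract (r * x / (2 * Real.pi)) : ℝ)) := by
  have hπ : (2 * Real.pi) ≠ 0 := by positivity
  have hreal : (r * x : ℝ) = 2 * Real.pi * Int.fract (r * x / (2 * Real.pi))
      + (⌊r * x / (2 * Real.pi)⌋ : ℝ) * (2 * Real.pi) := by
    rw [Int.fract]
    field_simp
    ring
  have h2 : ((r : ℂ) * x) = 2 * (Real.pi : ℂ) * ((Int.fract (r * x / (2 * Real.pi)) : ℝ) : ℂ)
      + ((⌊r * x / (2 * Real.pi)⌋ : ℤ) : ℂ) * (2 * (Real.pi : ℂ)) := by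
    exact_mod_cast congrArg (Complex.ofReal) hreal
  rw [show -(Complex.I * r * x)
      = -(2 * (Real.pi : ℂ) * Complex.I) * ((Int.fract (r * x / (2 * Real.pi)) : ℝ) : ℂ)
        + ((-⌊r * x / (2 * Real.pi)⌋ : ℤ) : ℂ) * (2 * (Real.pi : ℂ) * Complex.I) from by
    push_cast
    linear_combination (-Complex.I) * h2]
  rw [Complex.exp_add, Complex.exp_int_mul_two_pi_mul_I, mul_one]

theorem abs_exp_unit (x : ℝ) : ‖Complex.exp (-(Complex.I * x))‖ = 1 := by
  rw [Complex.norm_exp]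
  simp

theorem abs_exp_unit' (r x : ℝ) : ‖Complex.exp (-(Complex.I * r * x))‖ = 1 := by
  rw [Complex.norm_exp]
  simp

-- phase difference bound
theorem exp_fract_diff (u v : ℝ) (h : 2 * Real.pi * |u - v| ≤ 1) :
    ‖Complex.exp (-(2 * Real.pi * Complex.I) * (u:ℂ))
      - Complex.exp (-(2 * Real.pi * Complex.I) * (v:ℂ))‖ ≤ 2 * (2 * Real.pi * |u - v|) := by
  have hfac : Complex.exp (-(2 * Real.pi * Complex.I) * (u:ℂ))
      - Complex.exp (-(2 * Real.pi * Complex.I) * (v:ℂ))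
      = Complex.exp (-(2 * Real.pi * Complex.I) * (v:ℂ))
        * (Complex.exp (-(2 * Real.pi * Complex.I) * ((u:ℂ) - (v:ℂ))) - 1) := by
    rw [mul_sub, mul_one, ← Complex.exp_add]
    ring_nf
  rw [hfac, norm_mul]
  have h1 : ‖Complex.exp (-(2 * Real.pi * Complex.I) * (v:ℂ))‖ = 1 := by
    rw [Complex.norm_exp]
    simp
  rw [h1, one_mul]
  have habs : ‖-(2 * Real.pi * Complex.I) * ((u:ℂ) - (v:ℂ))‖
      = 2 * Real.pi * |u - v| := by
    rw [norm_mul]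
    rw [show -(2*(Real.pi:ℂ)*Complex.I) = ((-(2*Real.pi) : ℝ) : ℂ) * Complex.I by push_cast; ring]
    rw [norm_mul, Complex.norm_real, Complex.norm_I, mul_one, Real.norm_eq_abs, abs_neg,
      abs_of_nonneg (by positivity : (0:ℝ) ≤ 2*Real.pi)]
    rw [← Complex.ofReal_sub, Complex.norm_real, Real.norm_eq_abs]
  calc ‖Complex.exp (-(2 * Real.pi * Complex.I) * ((u:ℂ) - (v:ℂ))) - 1‖
      ≤ 2 * ‖-(2 * Real.pi * Complex.I) * ((u:ℂ) - (v:ℂ))‖ :=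
        Complex.norm_exp_sub_one_le (by rw [habs]; exact h)
    _ = 2 * (2 * Real.pi * |u - v|) := by rw [habs]

theorem floor_cells {x y s : ℝ} (hs : 0 < s) (hx : 0 ≤ x) (hy : 0 ≤ y)
    (hxy : ⌊x/s⌋₊ = ⌊y/s⌋₊) : |x - y| < s := by
  have e1 : (⌊x/s⌋₊ : ℝ) ≤ x/s := Nat.floor_le (by positivity)
  have e2 : y/s < (⌊y/s⌋₊ : ℝ) + 1 := Nat.lt_floor_add_one _
  have e3 : (⌊y/s⌋₊ : ℝ) ≤ y/s := Nat.floor_le (by positivity)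
  have e4 : x/s < (⌊x/s⌋₊ : ℝ) + 1 := Nat.lt_floor_add_one _
  have hcast : ((⌊x/s⌋₊ : ℕ) : ℝ) = ((⌊y/s⌋₊ : ℕ) : ℝ) := by exact_mod_cast hxy
  have d1 : x/s - y/s < 1 := by linarith
  have d2 : y/s - x/s < 1 := by linarith
  rw [abs_sub_lt_iff]
  constructor
  · calc x - y = (x/s - y/s)*s := by field_simp
      _ < 1*s := mul_lt_mul_of_pos_right d1 hs
      _ = s := one_mul s
  · calc y - x = (y/s - x/s)*s := by field_simp
      _ < 1*s := mul_lt_mul_of_pos_right d2 hs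
      _ = s := one_mul s

theorem tri4 {E : Type*} [NormedAddCommGroup E] (w x y z : E) :
    ‖w + x + y + z‖ ≤ ‖w‖ + ‖x‖ + ‖y‖ + ‖z‖ := by
  have h1 := norm_add_le (w+x+y) z
  have h2 := norm_add_le (w+x) y
  have h3 := norm_add_le w x
  linarith

theorem ap_exp_smul {E : Type*} [NormedAddCommGroup E] [NormedSpace ℂ E] {f : ℝ → E}
    (hf : AlmostPeriodic f) (r : ℝ) :
    AlmostPeriodic (fun s : ℝ => Complex.exp (-(Complex.I * r * s)) • f s) := by
  obtain ⟨C, hC0, hC⟩ := ap_bounded hf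
  have hcont : Continuous (fun s : ℝ => Complex.exp (-(Complex.I * r * s)) • f s) := by
    apply Continuous.smul _ hf.1
    exact Complex.continuous_exp.comp (by continuity)
  set g : ℝ → E := fun s => Complex.exp (-(Complex.I * r * s)) • f s with hgdef
  refine ⟨hcont, fun ε hε => ?_⟩
  obtain ⟨l, hl, hper⟩ := hf.2 (ε/4) (by linarith)
  obtain ⟨δ, hδ0, hδ⟩ := ap_unif hf (ε/4) (by linarith)
  have hπ := Real.pi_pos
  set η : ℝ := min (ε/(16*Real.pi*(C+1))) (1/(4*Real.pi)) with hηdef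
  have hη0 : 0 < η := lt_min (by positivity) (by positivity)
  have hη1 : η ≤ ε/(16*Real.pi*(C+1)) := min_le_left _ _
  have hη2 : η ≤ 1/(4*Real.pi) := min_le_right _ _
  -- choose shift functions
  choose τf hmem hp using fun a : ℝ => hper (-a)
  set b : ℝ → ℝ := fun a => a + τf a with hbdef
  have hb0 : ∀ a, 0 ≤ b a := fun a => by
    have := (hmem a).1; simp only [hbdef]; linarith
  have hbl : ∀ a, b a ≤ l := fun a => by
    have := (hmem a).2; simp only [hbdef]; linarith
  set u : ℝ → ℝ := fun a => Int.fract (r * a / (2*Real.pi)) with hudef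
  have hu0 : ∀ a, 0 ≤ u a := fun a => Int.fract_nonneg _
  have hu1 : ∀ a, u a ≤ 1 := fun a => (Int.fract_lt_one _).le
  set c : ℝ → ℕ × ℕ := fun a => (⌊u a / η⌋₊, ⌊b a / δ⌋₊) with hcdef
  -- splitting phases
  have hfacsplit : ∀ x y : ℝ, Complex.exp (-(Complex.I * r * (x+y)))
      = Complex.exp (-(Complex.I * r * x)) * Complex.exp (-(Complex.I * r * y)) := by
    intro x y
    rw [← Complex.exp_add]
    congr 1
    push_cast
    ring
  -- key: same cell gives ε-closeness of translates
  have hkey : ∀ a a' : ℝ, c a = c a' → ∀ t : ℝ, ‖g (t + a) - g (t + a')‖ ≤ ε := by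
    intro a a' hcc t
    have hub : |u a - u a'| < η := by
      apply floor_cells hη0 (hu0 a) (hu0 a')
      exact congrArg Prod.fst hcc
    have hbb : |b a - b a'| < δ := by
      apply floor_cells hδ0 (hb0 a) (hb0 a')
      exact congrArg Prod.snd hcc
    have hphase : ‖Complex.exp (-(Complex.I * r * a))
        - Complex.exp (-(Complex.I * r * a'))‖ ≤ ε/(4*(C+1)) := by
      rw [exp_fract r a, exp_fract r a']
      have h2π : 2*Real.pi*|u a - u a'| ≤ 1 := by
        have k1 : 2*Real.pi*|u a - u a'| ≤ 2*Real.pi*η := by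
          apply mul_le_mul_of_nonneg_left hub.le (by positivity)
        have k2 : 2*Real.pi*η ≤ 2*Real.pi*(1/(4*Real.pi)) := by
          apply mul_le_mul_of_nonneg_left hη2 (by positivity)
        have k3 : 2*Real.pi*(1/(4*Real.pi)) = 1/2 := by field_simp; ring
        linarith
      calc ‖_‖ ≤ 2*(2*Real.pi*|u a - u a'|) := exp_fract_diff _ _ h2π
        _ ≤ ε/(4*(C+1)) := by
            rw [le_div_iff₀ (by positivity : (0:ℝ) < 4*(C+1))]
            have h16 : η * (16*Real.pi*(C+1)) ≤ ε := by
              rw [← le_div_iff₀ (by positivity)]; exact hη1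
            nlinarith [mul_le_mul_of_nonneg_right hub.le
              (by positivity : (0:ℝ) ≤ 16*Real.pi*(C+1))]
    have hphase2 : ‖Complex.exp (-(Complex.I * r * (t+a)))
        - Complex.exp (-(Complex.I * r * (t+a')))‖ ≤ ε/(4*(C+1)) := by
      rw [hfacsplit t a, hfacsplit t a', ← mul_sub, norm_mul, abs_exp_unit' r t, one_mul]
      exact hphase
    have habsu : ∀ w : ℂ, w.re = 0 → ‖Complex.exp w‖ = 1 := fun w hw => by
      rw [Complex.norm_exp, hw, Real.exp_zero]
    have hba : t + b a = (t+a) + τf a := by simp only [hbdef]; ring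
    have hba' : t + b a' = (t+a') + τf a' := by simp only [hbdef]; ring
    have n1 : ‖Complex.exp (-(Complex.I * r * (t+a))) • (f (t+a) - f (t + b a))‖ ≤ ε/4 := by
      rw [norm_smul, habsu _ (by simp), one_mul, hba, norm_sub_rev]
      exact hp a (t+a)
    have n2 : ‖(Complex.exp (-(Complex.I * r * (t+a)))
        - Complex.exp (-(Complex.I * r * (t+a')))) • f (t + b a)‖ ≤ ε/4 := by
      rw [norm_smul]
      calc ‖_‖ * ‖f (t + b a)‖ ≤ (ε/(4*(C+1))) * C := by
            apply mul_le_mul hphase2 (hC _) (norm_nonneg _) (by positivity)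
        _ ≤ ε/4 := by
            rw [div_mul_eq_mul_div, div_le_div_iff₀ (by positivity) (by positivity)]
            nlinarith
    have n3 : ‖Complex.exp (-(Complex.I * r * (t+a'))) • (f (t + b a) - f (t + b a'))‖ ≤ ε/4 := by
      rw [norm_smul, habsu _ (by simp), one_mul]
      apply hδ
      rw [show (t + b a) - (t + b a') = b a - b a' by ring]
      exact hbb.le
    have n4 : ‖Complex.exp (-(Complex.I * r * (t+a'))) • (f (t + b a') - f (t+a'))‖ ≤ ε/4 := by
      rw [norm_smul, habsu _ (by simp), one_mul, hba']
      exact hp a' (t+a')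
    calc ‖g (t+a) - g (t+a')‖
        = ‖(Complex.exp (-(Complex.I * r * (t+a))) • (f (t+a) - f (t + b a)))
            + ((Complex.exp (-(Complex.I * r * (t+a)))
                - Complex.exp (-(Complex.I * r * (t+a')))) • f (t + b a))
            + (Complex.exp (-(Complex.I * r * (t+a'))) • (f (t + b a) - f (t + b a')))
            + (Complex.exp (-(Complex.I * r * (t+a'))) • (f (t + b a') - f (t+a')))‖ := by
          simp only [hgdef]
          congr 1
          push_cast
          simp only [smul_sub, sub_smul]
          abel
      _ ≤ ‖Complex.exp (-(Complex.I * r * (t+a))) • (f (t+a) - f (t + b a))‖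
            + ‖(Complex.exp (-(Complex.I * r * (t+a)))
                - Complex.exp (-(Complex.I * r * (t+a')))) • f (t + b a)‖
            + ‖Complex.exp (-(Complex.I * r * (t+a'))) • (f (t + b a) - f (t + b a'))‖
            + ‖Complex.exp (-(Complex.I * r * (t+a'))) • (f (t + b a') - f (t+a'))‖ :=
          tri4 _ _ _ _
      _ ≤ ε/4 + ε/4 + ε/4 + ε/4 := by gcongr
      _ = ε := by ring
  -- finite cells and representatives
  classical
  set pick : ℕ × ℕ → ℝ := fun v => if h : ∃ a, c a = v then h.choose else 0 with hpickdef
  have hpick : ∀ a : ℝ, c (pick (c a)) = c a := by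
    intro a
    have h : ∃ x, c x = c a := ⟨a, rfl⟩
    simp only [hpickdef]
    rw [dif_pos h]
    exact h.choose_spec
  set S : Finset (ℕ × ℕ) := Finset.range (⌊1/η⌋₊+1) ×ˢ Finset.range (⌊l/δ⌋₊+1) with hSdef
  have hmemS : ∀ a : ℝ, c a ∈ S := by
    intro a
    simp only [hSdef, Finset.mem_product, Finset.mem_range, Nat.lt_succ_iff]
    constructor
    · apply Nat.floor_le_floor
      gcongr
      exact hu1 a
    · apply Nat.floor_le_floor
      gcongr
      exact hbl a
  have hSne : S.Nonempty := ⟨c 0, hmemS 0⟩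
  set R : ℝ := S.sup' hSne (fun v => |pick v|) with hRdef
  have hR : ∀ a : ℝ, |pick (c a)| ≤ R := fun a => Finset.le_sup' (fun v => |pick v|) (hmemS a)
  have hR0 : 0 ≤ R := le_trans (abs_nonneg _) (hR 0)
  refine ⟨2*R+1, by linarith, fun A => ?_⟩
  set p : ℝ := pick (c (A + R)) with hpdef
  have hpR : |p| ≤ R := hR (A+R)
  obtain ⟨hp1, hp2⟩ := abs_le.1 hpR
  refine ⟨(A + R) - p, ⟨by linarith, by linarith⟩, ?_⟩
  intro t
  have e : ‖g (t + ((A+R) - p)) - g t‖ = ‖g ((t - p) + (A+R)) - g ((t - p) + p)‖ := by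
    rw [show t + ((A+R) - p) = (t - p) + (A+R) by ring, show (t - p) + p = t by ring]
  rw [e]
  exact hkey (A+R) p (hpick (A+R)).symm (t - p)

theorem shift_est {E : Type*} [NormedAddCommGroup E] [NormedSpace ℝ E]
    {g : ℝ → E} (hc : Continuous g) {C ε l : ℝ} (hC : ∀ t, ‖g t‖ ≤ C)
    (hper : ∀ a : ℝ, ∃ τ ∈ Set.Icc a (a + l), ∀ t : ℝ, ‖g (t + τ) - g t‖ ≤ ε)
    (a t : ℝ) (ht : 0 ≤ t) :
    ‖(∫ s in a..(a+t), g s) - ∫ s in (0:ℝ)..t, g s‖ ≤ t*ε + 2*l*C := by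
  have hC0 : 0 ≤ C := le_trans (norm_nonneg _) (hC 0)
  obtain ⟨τ, ⟨hτ1, hτ2⟩, hτ⟩ := hper (-a)
  set b := a + τ with hb
  have hb0 : 0 ≤ b := by simp only [hb]; linarith
  have hbl : b ≤ l := by simp only [hb]; linarith
  have hint : ∀ u v : ℝ, IntervalIntegrable g MeasureTheory.volume u v :=
    fun u v => hc.intervalIntegrable u v
  have hint' : ∀ u v : ℝ, IntervalIntegrable (fun s => g (s - τ)) MeasureTheory.volume u v :=
    fun u v => (hc.comp (continuous_id.sub continuous_const)).intervalIntegrable u v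
  -- change of variables
  have h1 : (∫ s in a..(a+t), g s) = ∫ s in b..(b+t), g (s - τ) := by
    rw [intervalIntegral.integral_comp_sub_right g τ]
    congr 1 <;> simp only [hb] <;> ring
  -- e^-period comparison
  have h2 : ‖(∫ s in b..(b+t), g (s - τ)) - ∫ s in b..(b+t), g s‖ ≤ t * ε := by
    rw [← intervalIntegral.integral_sub (hint' b (b+t)) (hint b (b+t))]
    have := intervalIntegral.norm_integral_le_of_norm_le_const
      (a := b) (b := b+t) (C := ε) (f := fun s => g (s - τ)- g s) ?_
    · calc ‖∫ s in b..(b+t), (g (s - τ) - g s)‖ ≤ ε * |b + t - b| := this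
        _ = t * ε := by rw [abs_of_nonneg (by linarith : (0:ℝ) ≤ b + t - b)]; ring
    · intro x _
      have : x - τ + τ = x := by ring
      calc ‖g (x - τ) - g x‖ = ‖g ((x - τ) + τ) - g (x - τ)‖ := by
            rw [this, norm_sub_rev]
        _ ≤ ε := hτ (x - τ)
  -- window shift
  have e1 := intervalIntegral.integral_add_adjacent_intervals (hint 0 b) (hint b (b+t))
  have e2 := intervalIntegral.integral_add_adjacent_intervals (hint 0 t) (hint t (b+t))
  have h3 : (∫ s in b..(b+t), g s) - ∫ s in (0:ℝ)..t, g s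
      = (∫ s in t..(b+t), g s) - ∫ s in (0:ℝ)..b, g s := by
    have := e1.trans e2.symm
    abel_nf
    abel_nf at this
    linear_combination (norm := abel_nf) this
  have h4 : ‖(∫ s in b..(b+t), g s) - ∫ s in (0:ℝ)..t, g s‖ ≤ 2*l*C := by
    rw [h3]
    have n1 : ‖∫ s in t..(b+t), g s‖ ≤ C * |b + t - t| :=
      intervalIntegral.norm_integral_le_of_norm_le_const (fun x _ => hC x)
    have n2 : ‖∫ s in (0:ℝ)..b, g s‖ ≤ C * |b - 0| :=
      intervalIntegral.norm_integral_le_of_norm_le_const (fun x _ => hC x)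
    have hab : |b + t - t| = b := by rw [show b + t - t = b by ring, abs_of_nonneg hb0]
    have hab2 : |b - (0:ℝ)| = b := by rw [sub_zero, abs_of_nonneg hb0]
    rw [hab] at n1; rw [hab2] at n2
    calc ‖(∫ s in t..(b+t), g s) - ∫ s in (0:ℝ)..b, g s‖
        ≤ ‖∫ s in t..(b+t), g s‖ + ‖∫ s in (0:ℝ)..b, g s‖ := norm_sub_le _ _
      _ ≤ C * b + C * b := by gcongr
      _ ≤ 2*l*C := by nlinarith
  calc ‖(∫ s in a..(a+t), g s) - ∫ s in (0:ℝ)..t, g s‖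
      = ‖((∫ s in b..(b+t), g (s - τ)) - ∫ s in b..(b+t), g s)
          + ((∫ s in b..(b+t), g s) - ∫ s in (0:ℝ)..t, g s)‖ := by rw [h1]; congr 1; abel
    _ ≤ ‖(∫ s in b..(b+t), g (s - τ)) - ∫ s in b..(b+t), g s‖
          + ‖(∫ s in b..(b+t), g s) - ∫ s in (0:ℝ)..t, g s‖ := norm_add_le _ _
    _ ≤ t*ε + 2*l*C := by gcongr

theorem blocks_est {E : Type*} [NormedAddCommGroup E] [NormedSpace ℝ E]
    {g : ℝ → E} (hc : Continuous g) {C ε l : ℝ} (hC : ∀ t, ‖g t‖ ≤ C)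
    (hper : ∀ a : ℝ, ∃ τ ∈ Set.Icc a (a + l), ∀ t : ℝ, ‖g (t + τ) - g t‖ ≤ ε)
    {T : ℝ} (hT : 0 ≤ T) (m : ℕ) :
    ‖(∫ s in (0:ℝ)..(m*T), g s) - (m:ℝ) • ∫ s in (0:ℝ)..T, g s‖ ≤ m*(T*ε + 2*l*C) := by
  induction m with
  | zero => simp
  | succ m ih =>
    have hint : ∀ u v : ℝ, IntervalIntegrable g MeasureTheory.volume u v :=
      fun u v => hc.intervalIntegrable u v
    have hadd := intervalIntegral.integral_add_adjacent_intervals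
      (hint 0 (m*T)) (hint (m*T) (m*T + T))
    have hcast : ((m+1 : ℕ) : ℝ) * T = m*T + T := by push_cast; ring
    have hs := shift_est hc hC hper (m*T) T hT
    calc ‖(∫ s in (0:ℝ)..((m+1:ℕ)*T), g s) - ((m+1:ℕ):ℝ) • ∫ s in (0:ℝ)..T, g s‖
        = ‖((∫ s in (0:ℝ)..(m*T), g s) - (m:ℝ) • ∫ s in (0:ℝ)..T, g s)
            + ((∫ s in (m*T)..(m*T+T), g s) - ∫ s in (0:ℝ)..T, g s)‖ := by
          rw [hcast, ← hadd]
          push_cast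
          rw [add_smul, one_smul]
          abel_nf
      _ ≤ ‖(∫ s in (0:ℝ)..(m*T), g s) - (m:ℝ) • ∫ s in (0:ℝ)..T, g s‖
            + ‖(∫ s in (m*T)..(m*T+T), g s) - ∫ s in (0:ℝ)..T, g s‖ := norm_add_le _ _
      _ ≤ m*(T*ε + 2*l*C) + (T*ε + 2*l*C) := by gcongr
      _ = (m+1:ℕ)*(T*ε + 2*l*C) := by push_cast; ring

theorem mean_exists {E : Type*} [NormedAddCommGroup E] [NormedSpace ℝ E] [CompleteSpace E]
    {g : ℝ → E} (hg : AlmostPeriodic g) :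
    ∃ P : E, Tendsto (fun t : ℝ => (t:ℝ)⁻¹ • ∫ s in (0:ℝ)..t, g s) atTop (𝓝 P) ∧
      ∀ α : ℝ, Tendsto (fun t : ℝ => (t:ℝ)⁻¹ • ∫ s in α..(t + α), g s) atTop (𝓝 P) := by
  obtain ⟨C, hC0, hC⟩ := ap_bounded hg
  have hc := hg.1
  have hint : ∀ u v : ℝ, IntervalIntegrable g MeasureTheory.volume u v :=
    fun u v => hc.intervalIntegrable u v
  set M : ℝ → E := fun t => (t:ℝ)⁻¹ • ∫ s in (0:ℝ)..t, g s with hM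
  -- main Cauchy estimate
  have main : ∀ ε > (0:ℝ), ∃ T0 : ℝ, 0 < T0 ∧ ∀ t ≥ T0, ‖M t - M T0‖ ≤ ε := by
    intro ε hε
    obtain ⟨l, hl, hper⟩ := hg.2 (ε/8) (by linarith)
    set T : ℝ := max 1 (16*l*C/ε) with hTdef
    have hT1 : (1:ℝ) ≤ T := le_max_left _ _
    have hT0 : (0:ℝ) < T := by linarith
    have hTl : 2*l*C/T ≤ ε/8 := by
      rw [div_le_iff₀ hT0]
      have h16 : 16*l*C/ε ≤ T := le_max_right _ _
      rw [div_le_iff₀ hε] at h16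
      nlinarith
    -- key floor estimate
    have hfloor : ∀ t ≥ T, ‖M t - M T‖ ≤ ε/8 + 2*l*C/T + 2*C*T/t := by
      intro t hts
      have ht0 : (0:ℝ) < t := lt_of_lt_of_le hT0 hts
      set m : ℕ := ⌊t/T⌋₊ with hm
      have hm1 : 1 ≤ m := by
        rw [hm, Nat.one_le_floor_iff]
        exact (one_le_div hT0).2 hts
      have hmpos : (0:ℝ) < (m:ℝ) := by exact_mod_cast Nat.pos_of_ne_zero (by omega)
      have hmT : (m:ℝ)*T ≤ t := by
        have h := Nat.floor_le (by positivity : (0:ℝ) ≤ t/T)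
        calc (m:ℝ)*T ≤ (t/T)*T := mul_le_mul_of_nonneg_right h hT0.le
          _ = t := by field_simp
      have hmT2 : t ≤ (m:ℝ)*T + T := by
        have h := (Nat.lt_floor_add_one (t/T)).le
        calc t = (t/T)*T := by field_simp
          _ ≤ ((m:ℝ)+1)*T := by gcongr
          _ = (m:ℝ)*T + T := by ring
      have hmT0 : (0:ℝ) < (m:ℝ)*T := by positivity
      set A := ∫ s in (0:ℝ)..t, g s with hA
      set B := ∫ s in (0:ℝ)..((m:ℝ)*T), g s with hB
      set D := ∫ s in (0:ℝ)..T, g s with hD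
      -- three pieces
      have p1 : ‖t⁻¹ • A - t⁻¹ • B‖ ≤ C*T/t := by
        rw [← smul_sub, norm_smul, norm_inv, Real.norm_eq_abs, abs_of_pos ht0]
        have hAB : A - B = ∫ s in ((m:ℝ)*T)..t, g s := by
          rw [hA, hB,
            ← intervalIntegral.integral_add_adjacent_intervals (hint 0 ((m:ℝ)*T)) (hint ((m:ℝ)*T) t)]
          abel
        have hn : ‖A - B‖ ≤ C * |t - (m:ℝ)*T| := by
          rw [hAB]; exact intervalIntegral.norm_integral_le_of_norm_le_const (fun x _ => hC x)
        have habs : |t - (m:ℝ)*T| ≤ T := by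
          rw [abs_of_nonneg (by linarith)]; linarith
        calc t⁻¹ * ‖A - B‖ ≤ t⁻¹ * (C*T) := by
              apply mul_le_mul_of_nonneg_left _ (by positivity)
              calc ‖A - B‖ ≤ C * |t - (m:ℝ)*T| := hn
                _ ≤ C * T := by gcongr
          _ = C*T/t := by ring
      have hBnorm : ‖B‖ ≤ C * ((m:ℝ)*T) := by
        have h := intervalIntegral.norm_integral_le_of_norm_le_const
          (a := (0:ℝ)) (b := (m:ℝ)*T) (C := C) (f := g) (fun x _ => hC x)
        rw [sub_zero, abs_of_pos hmT0] at h
        exact h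
      have p2 : ‖t⁻¹ • B - ((m:ℝ)*T)⁻¹ • B‖ ≤ C*T/t := by
        rw [← sub_smul, norm_smul, Real.norm_eq_abs]
        have habs : |t⁻¹ - ((m:ℝ)*T)⁻¹| = ((m:ℝ)*T)⁻¹ - t⁻¹ := by
          rw [abs_of_nonpos]
          · ring
          · simp only [sub_nonpos]
            exact inv_anti₀ hmT0 hmT
        rw [habs]
        have key : (((m:ℝ)*T)⁻¹ - t⁻¹) * (C * ((m:ℝ)*T)) = C*(t - (m:ℝ)*T)/t := by
          field_simp
        have hnum : C*(t - (m:ℝ)*T) ≤ C*T := by nlinarith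
        calc (((m:ℝ)*T)⁻¹ - t⁻¹) * ‖B‖ ≤ (((m:ℝ)*T)⁻¹ - t⁻¹) * (C * ((m:ℝ)*T)) := by
              apply mul_le_mul_of_nonneg_left hBnorm
              simp only [sub_nonneg]
              exact inv_anti₀ hmT0 hmT
          _ = C*(t - (m:ℝ)*T)/t := key
          _ ≤ C*T/t := by gcongr
      have p3 : ‖((m:ℝ)*T)⁻¹ • B - T⁻¹ • D‖ ≤ ε/8 + 2*l*C/T := by
        have hsm : ((m:ℝ)*T)⁻¹ • ((m:ℝ) • D) = T⁻¹ • D := by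
          rw [smul_smul]
          congr 1
          field_simp
        have hre : ((m:ℝ)*T)⁻¹ • B - T⁻¹ • D = ((m:ℝ)*T)⁻¹ • (B - (m:ℝ) • D) := by
          rw [smul_sub, hsm]
        rw [hre, norm_smul, Real.norm_eq_abs, abs_of_pos (by positivity)]
        have hbl := blocks_est hc hC hper hT0.le m
        rw [← hB, ← hD] at hbl
        have key : (((m:ℝ)*T))⁻¹ * ((m:ℝ)*(T*(ε/8) + 2*l*C)) = ε/8 + 2*l*C/T := by
          field_simp
        calc ((m:ℝ)*T)⁻¹ * ‖B - (m:ℝ) • D‖ ≤ ((m:ℝ)*T)⁻¹ * ((m:ℝ)*(T*(ε/8) + 2*l*C)) := by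
              apply mul_le_mul_of_nonneg_left hbl (by positivity)
          _ = ε/8 + 2*l*C/T := key
      have hMt : M t = t⁻¹ • A := by rw [hM]
      have hMT : M T = T⁻¹ • D := by rw [hM]
      calc ‖M t - M T‖
          = ‖(t⁻¹ • A - t⁻¹ • B) + (t⁻¹ • B - ((m:ℝ)*T)⁻¹ • B)
              + (((m:ℝ)*T)⁻¹ • B - T⁻¹ • D)‖ := by rw [hMt, hMT]; congr 1; abel
        _ ≤ ‖t⁻¹ • A - t⁻¹ • B‖ + ‖t⁻¹ • B - ((m:ℝ)*T)⁻¹ • B‖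
              + ‖((m:ℝ)*T)⁻¹ • B - T⁻¹ • D‖ := by
            exact le_trans (norm_add_le _ _) (by gcongr; exact norm_add_le _ _)
        _ ≤ C*T/t + C*T/t + (ε/8 + 2*l*C/T) := by gcongr
        _ = ε/8 + 2*l*C/T + 2*C*T/t := by ring
    -- choose T0
    set T1 : ℝ := max T (32*C*T/ε) with hT1def
    have hT1T : T ≤ T1 := le_max_left _ _
    have hT1pos : 0 < T1 := lt_of_lt_of_le hT0 hT1T
    have hsmall : ∀ t ≥ T1, 2*C*T/t ≤ ε/16 := by
      intro t ht
      have ht0 : (0:ℝ) < t := lt_of_lt_of_le hT1pos ht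
      rw [div_le_iff₀ ht0]
      have h32 : 32*C*T/ε ≤ t := le_trans (le_max_right _ _) ht
      rw [div_le_iff₀ hε] at h32
      nlinarith
    refine ⟨T1, hT1pos, fun t ht => ?_⟩
    have h1 := hfloor t (le_trans hT1T ht)
    have h2 := hfloor T1 hT1T
    have h3 := hsmall t ht
    have h4 := hsmall T1 (le_refl _)
    calc ‖M t - M T1‖ ≤ ‖M t - M T‖ + ‖M T1 - M T‖ := by
          rw [show M t - M T1 = (M t - M T) - (M T1 - M T) by abel]
          exact norm_sub_le _ _
      _ ≤ ε := by linarith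
  -- Cauchy sequence
  have hcauchy : CauchySeq M := by
    rw [Metric.cauchySeq_iff']
    intro ε hε
    obtain ⟨T0, _, h⟩ := main (ε/2) (by linarith)
    refine ⟨T0, fun t ht => ?_⟩
    rw [dist_eq_norm]
    calc ‖M t - M T0‖ ≤ ε/2 := h t ht
      _ < ε := by linarith
  obtain ⟨P, hP⟩ := cauchySeq_tendsto_of_complete hcauchy
  refine ⟨P, hP, fun α => ?_⟩
  rw [Metric.tendsto_atTop]
  intro ε hε
  obtain ⟨l, hl, hper⟩ := hg.2 (ε/4) (by linarith)
  obtain ⟨N1, hN1⟩ := Metric.tendsto_atTop.1 hP (ε/4) (by linarith)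
  refine ⟨max (max 1 N1) (16*l*C/ε), fun t ht => ?_⟩
  have ht1 : (1:ℝ) ≤ t := le_trans (le_trans (le_max_left _ _) (le_max_left _ _)) ht
  have ht0 : (0:ℝ) < t := by linarith
  have htN1 : N1 ≤ t := le_trans (le_trans (le_max_right _ _) (le_max_left _ _)) ht
  have htl : 16*l*C/ε ≤ t := le_trans (le_max_right _ _) ht
  have hlC : 2*l*C/t ≤ ε/8 := by
    rw [div_le_iff₀ ht0]
    rw [div_le_iff₀ hε] at htl
    nlinarith
  have hd1 : dist ((t:ℝ)⁻¹ • ∫ s in α..(t + α), g s) (M t) ≤ ε/4 + 2*l*C/t := by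
    rw [dist_eq_norm, hM]
    simp only []
    rw [← smul_sub, norm_smul, norm_inv, Real.norm_eq_abs, abs_of_pos ht0]
    have hcomm : t + α = α + t := add_comm _ _
    rw [hcomm]
    have hs := shift_est hc hC hper α t ht0.le
    calc t⁻¹ * ‖(∫ s in α..(α+t), g s) - ∫ s in (0:ℝ)..t, g s‖
        ≤ t⁻¹ * (t*(ε/4) + 2*l*C) := by
          apply mul_le_mul_of_nonneg_left hs (by positivity)
      _ = ε/4 + 2*l*C/t := by field_simp
  have hd2 : dist (M t) P < ε/4 := hN1 t htN1
  calc dist ((t:ℝ)⁻¹ • ∫ s in α..(t + α), g s) P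
      ≤ dist ((t:ℝ)⁻¹ • ∫ s in α..(t + α), g s) (M t) + dist (M t) P := dist_triangle _ _ _
    _ < (ε/4 + 2*l*C/t) + ε/4 := by
        have := hd1
        linarith
    _ ≤ ε := by linarith

/-- The Bohr transform `P_r(f) = lim_{t→∞} (1/t)∫₀ᵗ e^{-irs} f(s) ds` of an almost periodic
function exists, and equals `lim_{t→∞} (1/t)∫_α^{t+α} e^{-irs} f(s) ds` for every `α`. -/
theorem stmt6 {E : Type*} [NormedAddCommGroup E] [NormedSpace ℂ E] [CompleteSpace E]
    (f : ℝ → E) (hf : AlmostPeriodic f) (r : ℝ) :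
    ∃ P : E,
      Tendsto (fun t : ℝ => (t : ℝ)⁻¹ •
          ∫ s in (0:ℝ)..t, Complex.exp (-(Complex.I * r * s)) • f s) atTop (𝓝 P) ∧
      ∀ α : ℝ, Tendsto (fun t : ℝ => (t : ℝ)⁻¹ •
          ∫ s in α..(t + α), Complex.exp (-(Complex.I * r * s)) • f s) atTop (𝓝 P) :=
  mean_exists (ap_exp_smul hf r)
end

section
/- If f ∈ AP([0,∞) : E) is almost periodic on the half-line, then there is a unique continuous almost periodic extension F f : ℝ → E of f, and sup_{t∈ℝ} ‖(Ff)(t)‖ = sup_{t≥0} ‖f(t)‖. -/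
/-- `f` is almost periodic on the half-line `[0,∞)`. -/
def APHalf {E : Type*} [NormedAddCommGroup E] (f : ℝ → E) : Prop :=
  ContinuousOn f (Set.Ici 0) ∧ ∀ ε > (0:ℝ), ∃ l > (0:ℝ), ∀ a : ℝ, 0 ≤ a →
    ∃ τ ∈ Set.Icc a (a + l), ∀ t : ℝ, 0 ≤ t → ‖f (t + τ) - f t‖ ≤ ε

/-- Every almost periodic function on the half-line has a unique continuous almost periodic
extension to `ℝ`, and this extension has the same sup-norm. -/
theorem stmt9 {E : Type*} [NormedAddCommGroup E] [NormedSpace ℝ E] [CompleteSpace E]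
    (f : ℝ → E) (hf : APHalf f) :
    ∃ F : ℝ → E, (AlmostPeriodic F ∧ ∀ t : ℝ, 0 ≤ t → F t = f t) ∧
      (∀ G : ℝ → E, AlmostPeriodic G → (∀ t : ℝ, 0 ≤ t → G t = f t) → G = F) ∧
      (⨆ t : ℝ, ‖F t‖) = ⨆ t : Set.Ici (0:ℝ), ‖f t‖ := by
  classical
  obtain ⟨hcont, hap⟩ := hf
  -- choose a sequence of almost periods `τ n ≥ n` with tolerance `1/(n+1)`
  have hτex : ∀ n : ℕ, ∃ s : ℝ, (n : ℝ) ≤ s ∧ ∀ t, 0 ≤ t → ‖f (t + s) - f t‖ ≤ 1/(n+1) := by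
    intro n
    obtain ⟨l, hl, h⟩ := hap (1/(n+1)) (by positivity)
    obtain ⟨s, hmem, hs⟩ := h n (Nat.cast_nonneg n)
    exact ⟨s, hmem.1, hs⟩
  choose τ hτge hτap using hτex
  have hτnn : ∀ n, (0:ℝ) ≤ τ n := fun n => le_trans (Nat.cast_nonneg n) (hτge n)
  have hinv0 : Filter.Tendsto (fun n : ℕ => 1/((n:ℝ)+1)) Filter.atTop (nhds 0) :=
    tendsto_one_div_add_atTop_nhds_zero_nat
  have key : ∀ (t : ℝ) (m n : ℕ), -t ≤ m → -t ≤ n →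
      ‖f (t + τ n) - f (t + τ m)‖ ≤ 1/(n+1) + 1/(m+1) := by
    intro t m n hm hn
    have h1 : 0 ≤ t + τ n := by have := hτge n; linarith
    have h2 : 0 ≤ t + τ m := by have := hτge m; linarith
    have e1 := hτap m (t + τ n) h1
    have e2 := hτap n (t + τ m) h2
    have harg : t + τ n + τ m = t + τ m + τ n := by ring
    calc ‖f (t + τ n) - f (t + τ m)‖
        = ‖(f (t + τ m + τ n) - f (t + τ m)) - (f (t + τ n + τ m) - f (t + τ n))‖ := by
          rw [harg]; congr 1; abel
      _ ≤ ‖f (t + τ m + τ n) - f (t + τ m)‖ + ‖f (t + τ n + τ m) - f (t + τ n)‖ :=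
          norm_sub_le _ _
      _ ≤ 1/(n+1) + 1/(m+1) := add_le_add e2 e1
  have hcauchy : ∀ t : ℝ, CauchySeq (fun n => f (t + τ n)) := by
    intro t
    rw [Metric.cauchySeq_iff]
    intro ε hε
    obtain ⟨N₁, hN₁⟩ := exists_nat_ge (-t)
    obtain ⟨N₂, hN₂⟩ := Filter.eventually_atTop.mp (hinv0.eventually_lt_const (half_pos hε))
    refine ⟨max N₁ N₂, fun m hm n hn => ?_⟩
    have hm1 : (-t : ℝ) ≤ m := le_trans hN₁ (Nat.cast_le.mpr (le_trans (le_max_left _ _) hm))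
    have hn1 : (-t : ℝ) ≤ n := le_trans hN₁ (Nat.cast_le.mpr (le_trans (le_max_left _ _) hn))
    have hb := key t n m hn1 hm1
    have b1 : 1/((m:ℝ)+1) < ε/2 := hN₂ m (le_trans (le_max_right _ _) hm)
    have b2 : 1/((n:ℝ)+1) < ε/2 := hN₂ n (le_trans (le_max_right _ _) hn)
    rw [dist_eq_norm]
    linarith
  have hFex : ∀ t : ℝ, ∃ x : E, Filter.Tendsto (fun n => f (t + τ n)) Filter.atTop (nhds x) :=
    fun t => cauchySeq_tendsto_of_complete (hcauchy t)
  choose F hF using hFex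
  have hev : ∀ t : ℝ, ∀ᶠ n : ℕ in Filter.atTop, (-t : ℝ) ≤ n := by
    intro t
    obtain ⟨N, hN⟩ := exists_nat_ge (-t)
    filter_upwards [Filter.eventually_ge_atTop N] with n hn
    exact le_trans hN (Nat.cast_le.mpr hn)
  -- approximation estimate
  have happrox : ∀ (n : ℕ) (t : ℝ), -t ≤ n → ‖F t - f (t + τ n)‖ ≤ 1/(n+1) := by
    intro n t hn
    have h1 : Filter.Tendsto (fun m => ‖f (t + τ m) - f (t + τ n)‖) Filter.atTop
        (nhds ‖F t - f (t + τ n)‖) := ((hF t).sub tendsto_const_nhds).norm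
    have h2 : Filter.Tendsto (fun m : ℕ => 1/((m:ℝ)+1) + 1/((n:ℝ)+1)) Filter.atTop
        (nhds (1/((n:ℝ)+1))) := by
      simpa using hinv0.add (tendsto_const_nhds (x := 1/((n:ℝ)+1)))
    refine le_of_tendsto_of_tendsto h1 h2 ?_
    filter_upwards [hev t] with m hm
    exact key t n m hn hm
  -- every nonnegative half-line almost period of f is a period of F on all of ℝ
  have hper : ∀ (ε σ : ℝ), 0 ≤ σ → (∀ s, 0 ≤ s → ‖f (s + σ) - f s‖ ≤ ε) →
      ∀ t : ℝ, ‖F (t + σ) - F t‖ ≤ ε := by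
    intro ε σ hσ hσp t
    have h1 : Filter.Tendsto (fun n => ‖f (t + σ + τ n) - f (t + τ n)‖) Filter.atTop
        (nhds ‖F (t + σ) - F t‖) := ((hF (t + σ)).sub (hF t)).norm
    refine le_of_tendsto h1 ?_
    filter_upwards [hev t] with n hn
    have h0 : 0 ≤ t + τ n := by have := hτge n; linarith
    have harg : t + σ + τ n = (t + τ n) + σ := by ring
    rw [harg]
    exact hσp (t + τ n) h0
  -- F extends f
  have hFf : ∀ t : ℝ, 0 ≤ t → F t = f t := by
    intro t ht
    refine tendsto_nhds_unique (hF t) ?_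
    have hz : Filter.Tendsto (fun n => f (t + τ n) - f t) Filter.atTop (nhds 0) :=
      squeeze_zero_norm (fun n => hτap n t ht) hinv0
    have := hz.add (tendsto_const_nhds (x := f t))
    simpa using this
  -- continuity of F
  have hFcont : Continuous F := by
    have hgc : ∀ n : ℕ, Continuous (fun t : ℝ => f (max (t + τ n) 0)) := by
      intro n
      refine hcont.comp_continuous ?_ (fun t => Set.mem_Ici.mpr (le_max_right _ _))
      exact (continuous_id.add continuous_const).max continuous_const
    have hloc : TendstoLocallyUniformly (fun n (t : ℝ) => f (max (t + τ n) 0)) F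
        Filter.atTop := by
      rw [Metric.tendstoLocallyUniformly_iff]
      intro ε hε x
      refine ⟨Set.Icc (x - 1) (x + 1), Icc_mem_nhds (by linarith) (by linarith), ?_⟩
      obtain ⟨N₁, hN₁⟩ := exists_nat_ge (1 - x)
      obtain ⟨N₂, hN₂⟩ := Filter.eventually_atTop.mp (hinv0.eventually_lt_const hε)
      filter_upwards [Filter.eventually_ge_atTop (max N₁ N₂)] with n hn y hy
      have hn1 : (1 - x : ℝ) ≤ n := le_trans hN₁ (Nat.cast_le.mpr (le_trans (le_max_left _ _) hn))
      have hny : -y ≤ (n:ℝ) := by have := hy.1; linarith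
      have h0 : 0 ≤ y + τ n := by have := hτge n; linarith
      rw [max_eq_left h0, dist_eq_norm]
      exact lt_of_le_of_lt (happrox n y hny) (hN₂ n (le_trans (le_max_right _ _) hn))
    exact hloc.continuous (Filter.Eventually.of_forall hgc).frequently
  -- boundedness
  obtain ⟨l₁, hl₁, hap₁⟩ := hap 1 one_pos
  obtain ⟨C, hC⟩ := (isCompact_Icc (a := (0:ℝ)) (b := l₁)).exists_bound_of_continuousOn
    (hcont.mono (fun s hs => hs.1))
  have hfb : ∀ t : ℝ, 0 ≤ t → ‖f t‖ ≤ C + 1 := by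
    intro t ht
    rcases le_or_gt t l₁ with h | h
    · have := hC t ⟨ht, h⟩; linarith
    · obtain ⟨σ, hmem, hσ⟩ := hap₁ (t - l₁) (by linarith)
      have hs0 : 0 ≤ t - σ := by have := hmem.2; linarith
      have hsl : t - σ ≤ l₁ := by have := hmem.1; linarith
      have h1 := hσ (t - σ) hs0
      have harg : t - σ + σ = t := by ring
      rw [harg] at h1
      have hb := hC (t - σ) ⟨hs0, hsl⟩
      calc ‖f t‖ = ‖f (t - σ) + (f t - f (t - σ))‖ := by congr 1; abel
        _ ≤ ‖f (t - σ)‖ + ‖f t - f (t - σ)‖ := norm_add_le _ _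
        _ ≤ C + 1 := add_le_add hb h1
  have hFb : ∀ t : ℝ, ‖F t‖ ≤ C + 1 := by
    intro t
    refine le_of_tendsto (hF t).norm ?_
    filter_upwards [hev t] with n hn
    have h0 : 0 ≤ t + τ n := by have := hτge n; linarith
    exact hfb _ h0
  -- almost periodicity of F
  have hFap : AlmostPeriodic F := by
    refine ⟨hFcont, ?_⟩
    intro ε hε
    obtain ⟨l, hl, h⟩ := hap (ε/2) (half_pos hε)
    refine ⟨l, hl, fun a => ?_⟩
    have hc0 : (0:ℝ) ≤ max (-a) 0 := le_max_right _ _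
    have hca : -a ≤ max (-a) 0 := le_max_left _ _
    obtain ⟨τ₂, hτ₂mem, hτ₂⟩ := h (max (-a) 0) hc0
    have hτ₂nn : 0 ≤ τ₂ := le_trans hc0 hτ₂mem.1
    have haτ₂ : 0 ≤ a + τ₂ := by have := hτ₂mem.1; linarith
    obtain ⟨τ₁, hτ₁mem, hτ₁⟩ := h (a + τ₂) haτ₂
    have hτ₁nn : 0 ≤ τ₁ := le_trans haτ₂ hτ₁mem.1
    refine ⟨τ₁ - τ₂, ⟨by have := hτ₁mem.1; linarith, by have := hτ₁mem.2; linarith⟩, ?_⟩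
    intro t
    have e1 : ‖F ((t - τ₂) + τ₁) - F (t - τ₂)‖ ≤ ε/2 := hper _ _ hτ₁nn hτ₁ _
    have e2 : ‖F ((t - τ₂) + τ₂) - F (t - τ₂)‖ ≤ ε/2 := hper _ _ hτ₂nn hτ₂ _
    have harg1 : (t - τ₂) + τ₁ = t + (τ₁ - τ₂) := by ring
    have harg2 : (t - τ₂) + τ₂ = t := by ring
    rw [harg1] at e1
    rw [harg2] at e2
    calc ‖F (t + (τ₁ - τ₂)) - F t‖
        = ‖(F (t + (τ₁ - τ₂)) - F (t - τ₂)) - (F t - F (t - τ₂))‖ := by congr 1; abel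
      _ ≤ ‖F (t + (τ₁ - τ₂)) - F (t - τ₂)‖ + ‖F t - F (t - τ₂)‖ := norm_sub_le _ _
      _ ≤ ε/2 + ε/2 := add_le_add e1 e2
      _ = ε := add_halves ε
  -- uniqueness
  have huniq : ∀ G : ℝ → E, AlmostPeriodic G → (∀ t : ℝ, 0 ≤ t → G t = f t) → G = F := by
    intro G hG hGf
    funext t
    have hB : Filter.Tendsto (fun n => G (t + τ n)) Filter.atTop (nhds (F t)) := by
      refine (hF t).congr' ?_
      filter_upwards [hev t] with n hn
      have h0 : 0 ≤ t + τ n := by have := hτge n; linarith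
      exact (hGf _ h0).symm
    have hA : Filter.Tendsto (fun n => G (t + τ n)) Filter.atTop (nhds (G t)) := by
      rw [Metric.tendsto_atTop]
      intro ε hε
      obtain ⟨l', hl', h'⟩ := hG.2 (ε/4) (by linarith)
      obtain ⟨σ, hσmem, hσ⟩ := h' (max (-t) 0)
      have hσt : 0 ≤ t + σ := by
        have h1 := hσmem.1; have h2 : -t ≤ max (-t) 0 := le_max_left _ _; linarith
      obtain ⟨N₁, hN₁⟩ := exists_nat_ge (-(t + σ))
      obtain ⟨N₂, hN₂⟩ := Filter.eventually_atTop.mp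
        (hinv0.eventually_lt_const (show (0:ℝ) < ε/4 by linarith))
      refine ⟨max N₁ N₂, fun n hn => ?_⟩
      have hb2 : 1/((n:ℝ)+1) < ε/4 := hN₂ n (le_trans (le_max_right _ _) hn)
      have h0 : 0 ≤ t + σ + τ n := by have := hτnn n; linarith
      have p1 : ‖G (t + τ n + σ) - G (t + τ n)‖ ≤ ε/4 := hσ (t + τ n)
      have p3 : ‖G (t + σ) - G t‖ ≤ ε/4 := hσ t
      have p2 : ‖G (t + σ + τ n) - G (t + σ)‖ ≤ 1/((n:ℝ)+1) := by
        rw [hGf _ h0, hGf _ hσt]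
        exact hτap n (t + σ) hσt
      have harg : t + τ n + σ = t + σ + τ n := by ring
      rw [harg] at p1
      have q1 : dist (G (t + τ n)) (G (t + σ + τ n)) ≤ ε/4 := by
        rw [dist_eq_norm, norm_sub_rev]; exact p1
      have q2 : dist (G (t + σ + τ n)) (G (t + σ)) ≤ 1/((n:ℝ)+1) := by
        rw [dist_eq_norm]; exact p2
      have q3 : dist (G (t + σ)) (G t) ≤ ε/4 := by
        rw [dist_eq_norm]; exact p3
      calc dist (G (t + τ n)) (G t)
          ≤ dist (G (t + τ n)) (G (t + σ + τ n)) + dist (G (t + σ + τ n)) (G (t + σ))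
            + dist (G (t + σ)) (G t) := dist_triangle4 _ _ _ _
        _ < ε := by linarith
    exact tendsto_nhds_unique hA hB
  -- sup equality
  have hbddf : BddAbove (Set.range fun t : Set.Ici (0:ℝ) => ‖f t‖) := by
    refine ⟨C + 1, ?_⟩
    rintro x ⟨⟨t, ht⟩, rfl⟩
    exact hfb t ht
  have hbddF : BddAbove (Set.range fun t : ℝ => ‖F t‖) := by
    refine ⟨C + 1, ?_⟩
    rintro x ⟨t, rfl⟩
    exact hFb t
  have hsup : (⨆ t : ℝ, ‖F t‖) = ⨆ t : Set.Ici (0:ℝ), ‖f t‖ := by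
    apply le_antisymm
    · refine ciSup_le fun t => ?_
      refine le_of_tendsto (hF t).norm ?_
      filter_upwards [hev t] with n hn
      have h0 : 0 ≤ t + τ n := by have := hτge n; linarith
      exact le_ciSup hbddf ⟨t + τ n, h0⟩
    · refine ciSup_le fun t => ?_
      obtain ⟨t, ht⟩ := t
      have h1 : ‖f t‖ = ‖F t‖ := by rw [hFf t ht]
      calc ‖f (⟨t, ht⟩ : Set.Ici (0:ℝ))‖ = ‖F t‖ := h1
        _ ≤ ⨆ s : ℝ, ‖F s‖ := le_ciSup hbddF t
  exact ⟨F, ⟨hFap, hFf⟩, huniq, hsup⟩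
end

section
/- Let u : [0,∞) → E be a bounded continuous function satisfying A∫₀ᵗ u(s)ds = u(t) − x (mild solution of u' = Au, u(0) = x) for a closed operator A. Suppose the Cesàro mean P_r := lim_{t→∞}(1/t)∫₀ᵗ e^{−irs}u(s)ds exists for some r ∈ ℝ. Then P_r ∈ D(A) and A P_r = ir P_r. -/
open Filter Topology MeasureTheory

lemma integral_mem_closed_submodule' {F : Type*} [NormedAddCommGroup F] [NormedSpace ℂ F]
    [CompleteSpace F] (G : Submodule ℂ F) (hG : IsClosed (G : Set F))
    (f : ℝ → F) (hf : Continuous f) (hmem : ∀ s, f s ∈ G) (a b : ℝ) :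
    (∫ s in a..b, f s) ∈ G := by
  haveI : CompleteSpace G := hG.completeSpace_coe
  have hgc : Continuous (fun s => (⟨f s, hmem s⟩ : G)) := hf.subtype_mk _
  have h1 : (∫ s in a..b, G.subtypeL (⟨f s, hmem s⟩ : G))
      = G.subtypeL (∫ s in a..b, (⟨f s, hmem s⟩ : G)) :=
    ContinuousLinearMap.intervalIntegral_comp_comm _ (hgc.intervalIntegrable a b)
  have h2 : (∫ s in a..b, f s) = G.subtypeL (∫ s in a..b, (⟨f s, hmem s⟩ : G)) := by
    rw [← h1]; rfl
  rw [h2]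
  exact SetLike.coe_mem _

/-- If `u` is a bounded continuous mild solution of `u' = Au`, `u(0) = x`, for a closed
operator `A`, and the Cesàro mean `P_r = lim_{t→∞} (1/t)∫₀ᵗ e^{-irs}u(s) ds` exists, then
`P_r ∈ D(A)` and `A P_r = ir P_r`. -/
theorem stmt16 {E : Type*} [NormedAddCommGroup E] [NormedSpace ℂ E] [CompleteSpace E]
    (D : Submodule ℂ E) (A : D →ₗ[ℂ] E)
    (hclosed : IsClosed {p : E × E | ∃ h : p.1 ∈ D, A ⟨p.1, h⟩ = p.2})
    (x : E) (u : ℝ → E) (hcont : ContinuousOn u (Set.Ici 0))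
    (hbdd : ∃ M : ℝ, ∀ t : ℝ, 0 ≤ t → ‖u t‖ ≤ M)
    (hmild : ∀ t : ℝ, 0 ≤ t → ∃ h : (∫ s in (0:ℝ)..t, u s) ∈ D,
      A ⟨∫ s in (0:ℝ)..t, u s, h⟩ = u t - x)
    (r : ℝ) (P : E)
    (hP : Tendsto (fun t : ℝ => (t : ℝ)⁻¹ •
      ∫ s in (0:ℝ)..t, Complex.exp (-(Complex.I * r * s)) • u s) atTop (𝓝 P)) :
    ∃ h : P ∈ D, A ⟨P, h⟩ = (Complex.I * r) • P := by
  obtain ⟨M, hM⟩ := hbdd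
  set c : ℂ := Complex.I * r with hc
  set e : ℝ → ℂ := fun s => Complex.exp (-(c * s)) with he
  set m : ℝ → ℝ := fun s => max s 0 with hm
  have hmcont : Continuous m := continuous_id.max continuous_const
  have hmge : ∀ s, 0 ≤ m s := fun s => le_max_right s 0
  set w : ℝ → E := fun s => u (m s) with hw
  have hwcont : Continuous w := by
    rw [← continuousOn_univ]
    exact hcont.comp (hmcont.continuousOn) (fun s _ => hmge s)
  have hwu : ∀ s : ℝ, 0 ≤ s → w s = u s := fun s hs => by
    simp only [hw, hm, max_eq_left hs]
  set v : ℝ → E := fun t => ∫ s in (0:ℝ)..t, w s with hv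
  have hvu : ∀ t : ℝ, 0 ≤ t → v t = ∫ s in (0:ℝ)..t, u s := by
    intro t ht
    apply intervalIntegral.integral_congr
    intro s hs
    rw [Set.uIcc_of_le ht] at hs
    exact hwu s hs.1
  have hvd : ∀ s : ℝ, HasDerivAt v (w s) s := fun s =>
    intervalIntegral.integral_hasDerivAt_right (hwcont.intervalIntegrable _ _)
      hwcont.aestronglyMeasurable.stronglyMeasurableAtFilter hwcont.continuousAt
  have hvcont : Continuous v :=
    continuous_iff_continuousAt.2 fun s => (hvd s).continuousAt
  have hecont : Continuous e := Complex.continuous_exp.comp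
    ((continuous_const.mul Complex.continuous_ofReal).neg)
  have hed : ∀ s : ℝ, HasDerivAt e (-c * e s) s := by
    intro s
    have h0 : HasDerivAt (fun s : ℝ => -(c * (s : ℂ))) (-(c * 1)) s := by
      have h1 : HasDerivAt (fun s : ℝ => (s : ℂ)) 1 s := by
        simpa using (hasDerivAt_id s).ofReal_comp
      exact (h1.const_mul c).neg
    rw [mul_one] at h0
    have h2 := h0.cexp
    rw [show (-c * e s) = e s * -c from mul_comm _ _]
    exact h2
  have hnorme : ∀ s : ℝ, ‖e s‖ = 1 := by
    intro s
    rw [he]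
    simp only [Complex.norm_exp]
    norm_num [hc, Complex.mul_re, Complex.mul_im]
  -- integration by parts
  have key : ∀ t : ℝ, (∫ s in (0:ℝ)..t, e s • w s)
      = e t • v t + c • ∫ s in (0:ℝ)..t, e s • v s := by
    intro t
    have hH : ∀ s ∈ Set.uIcc (0:ℝ) t,
        HasDerivAt (fun s => e s • v s) (e s • w s + (-c * e s) • v s) s := by
      intro s _
      exact (hed s).smul (hvd s)
    have hi1 : IntervalIntegrable (fun s => e s • w s) volume 0 t :=
      (hecont.smul hwcont).intervalIntegrable _ _
    have hi2 : IntervalIntegrable (fun s => (-c * e s) • v s) volume 0 t :=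
      ((continuous_const.mul hecont).smul hvcont).intervalIntegrable _ _
    have h2 := intervalIntegral.integral_eq_sub_of_hasDerivAt hH (hi1.add hi2)
    rw [intervalIntegral.integral_add hi1 hi2] at h2
    have h3 : (∫ s in (0:ℝ)..t, (-c * e s) • v s)
        = (-c) • ∫ s in (0:ℝ)..t, e s • v s := by
      simp_rw [mul_smul]
      exact intervalIntegral.integral_smul _ _
    have hv0 : v 0 = 0 := intervalIntegral.integral_same
    rw [h3, hv0, smul_zero, sub_zero] at h2
    have := eq_sub_of_add_eq h2
    rw [this]
    rw [neg_smul, sub_neg_eq_add]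
  -- primitive of e
  have hce : ∀ t : ℝ, c * (∫ s in (0:ℝ)..t, e s) = 1 - e t := by
    intro t
    rcases eq_or_ne c 0 with h0 | h0
    · simp [he, h0]
    · have hH : ∀ s ∈ Set.uIcc (0:ℝ) t, HasDerivAt (fun s => (-c)⁻¹ * e s) (e s) s := by
        intro s _
        have := (hed s).const_mul (-c)⁻¹
        convert this using 1
        · rfl
        · rw [← mul_assoc, inv_mul_cancel₀ (neg_ne_zero.2 h0), one_mul]
      have h2 := intervalIntegral.integral_eq_sub_of_hasDerivAt hH
        (hecont.intervalIntegrable _ _)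
      rw [h2]
      have he0 : e 0 = 1 := by simp [he]
      have hcc : c * (-c)⁻¹ = -1 := by
        rw [inv_neg, mul_neg, mul_inv_cancel₀ h0]
      rw [he0]
      linear_combination (e t - 1) * hcc
  -- the graph submodule
  set G : Submodule ℂ (E × E) := LinearMap.range ((D.subtype).prod A) with hG
  have hGmem : ∀ p : E × E, p ∈ G ↔ ∃ h : p.1 ∈ D, A ⟨p.1, h⟩ = p.2 := by
    intro p
    constructor
    · rintro ⟨⟨y, hy⟩, hq⟩
      simp only [LinearMap.prod_apply, Submodule.coe_subtype, Pi.prod] at hq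
      cases hq
      exact ⟨hy, rfl⟩
    · rintro ⟨h1, h2⟩
      refine ⟨⟨p.1, h1⟩, ?_⟩
      simp only [LinearMap.prod_apply, Submodule.coe_subtype, Pi.prod]
      exact Prod.ext rfl h2
  have hGclosed : IsClosed (G : Set (E × E)) := by
    have : (G : Set (E × E)) = {p : E × E | ∃ h : p.1 ∈ D, A ⟨p.1, h⟩ = p.2} :=
      Set.ext fun p => hGmem p
    rw [this]; exact hclosed
  have hvmem : ∀ t : ℝ, 0 ≤ t → ((v t, w t - x) : E × E) ∈ G := by
    intro t ht
    rw [hGmem]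
    simp only [hvu t ht, hwu t ht]
    exact hmild t ht
  set φ : ℝ → E × E := fun s => (e (m s) • v (m s), e (m s) • (w s - x)) with hφ
  have hwm : ∀ s : ℝ, w (m s) = w s := by
    intro s
    simp only [hw, hm]
    rw [max_eq_left (le_max_right s 0)]
  have hφmem : ∀ s : ℝ, φ s ∈ G := by
    intro s
    have h1 : ((v (m s), w s - x) : E × E) ∈ G := by
      have h2 := hvmem (m s) (hmge s)
      rwa [hwm s] at h2
    have h3 := G.smul_mem (e (m s)) h1
    simpa [hφ, Prod.smul_mk] using h3
  have hφcont : Continuous φ :=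
    ((hecont.comp hmcont).smul (hvcont.comp hmcont)).prodMk
      ((hecont.comp hmcont).smul (hwcont.sub continuous_const))
  have hImem : ∀ t : ℝ, (∫ s in (0:ℝ)..t, φ s) ∈ G := fun t =>
    integral_mem_closed_submodule' G hGclosed φ hφcont hφmem 0 t
  have hI : ∀ t : ℝ, 0 ≤ t → (∫ s in (0:ℝ)..t, φ s)
      = (∫ s in (0:ℝ)..t, e s • v s, ∫ s in (0:ℝ)..t, e s • (w s - x)) := by
    intro t ht
    have hint := hφcont.intervalIntegrable (μ := volume) 0 t
    have h1 := (ContinuousLinearMap.fst ℂ E E).intervalIntegral_comp_comm hint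
    have h2 := (ContinuousLinearMap.snd ℂ E E).intervalIntegral_comp_comm hint
    refine Prod.ext ?_ ?_
    · rw [show (∫ s in (0:ℝ)..t, φ s).1
          = ContinuousLinearMap.fst ℂ E E (∫ s in (0:ℝ)..t, φ s) from rfl, ← h1]
      apply intervalIntegral.integral_congr
      intro s hs
      rw [Set.uIcc_of_le ht] at hs
      simp only [hφ, ContinuousLinearMap.coe_fst']
      rw [show m s = s from max_eq_left hs.1]
    · rw [show (∫ s in (0:ℝ)..t, φ s).2
          = ContinuousLinearMap.snd ℂ E E (∫ s in (0:ℝ)..t, φ s) from rfl, ← h2]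
      apply intervalIntegral.integral_congr
      intro s hs
      rw [Set.uIcc_of_le ht] at hs
      simp only [hφ, ContinuousLinearMap.coe_snd']
      rw [show m s = s from max_eq_left hs.1]
  -- the second component function
  set S : ℝ → E := fun t => e t • (u t - x) + c • ∫ s in (0:ℝ)..t, e s • (u s - x) with hS
  -- membership of the scaled pair
  have hmemb : ∀ t : ℝ, 0 ≤ t →
      (((t : ℝ)⁻¹ • ∫ s in (0:ℝ)..t, e s • u s, (t : ℝ)⁻¹ • S t) : E × E) ∈ G := by
    intro t ht
    have hq : ((e t • v t, e t • (w t - x)) : E × E) ∈ G := by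
      have := G.smul_mem (e t) (hvmem t ht)
      simpa [Prod.smul_mk] using this
    have hGsum : ((e t • v t, e t • (w t - x)) + c • (∫ s in (0:ℝ)..t, φ s) : E × E) ∈ G :=
      G.add_mem hq (G.smul_mem c (hImem t))
    have hsm := G.smul_mem ((t : ℂ)⁻¹) hGsum
    have hcongr1 : (∫ s in (0:ℝ)..t, e s • w s) = ∫ s in (0:ℝ)..t, e s • u s := by
      apply intervalIntegral.integral_congr
      intro s hs
      rw [Set.uIcc_of_le ht] at hs
      simp only [hwu s hs.1]
    have hcongr2 : (∫ s in (0:ℝ)..t, e s • (w s - x)) = ∫ s in (0:ℝ)..t, e s • (u s - x) := by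
      apply intervalIntegral.integral_congr
      intro s hs
      rw [Set.uIcc_of_le ht] at hs
      simp only [hwu s hs.1]
    have heq : (((t : ℝ)⁻¹ • ∫ s in (0:ℝ)..t, e s • u s, (t : ℝ)⁻¹ • S t) : E × E)
        = ((t : ℂ)⁻¹ • ((e t • v t, e t • (w t - x)) + c • (∫ s in (0:ℝ)..t, φ s)) : E × E) := by
      rw [hI t ht, hcongr2]
      have h1 : e t • v t + c • ∫ s in (0:ℝ)..t, e s • v s = ∫ s in (0:ℝ)..t, e s • u s := by
        rw [← key t, hcongr1]
      refine Prod.ext ?_ ?_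
      · show (t : ℝ)⁻¹ • (∫ s in (0:ℝ)..t, e s • u s)
          = (t : ℂ)⁻¹ • (e t • v t + c • ∫ s in (0:ℝ)..t, e s • v s)
        rw [h1]
        rw [show ((t : ℂ)⁻¹ : ℂ) = ((t⁻¹ : ℝ) : ℂ) by push_cast; ring]
        rw [Complex.coe_smul]
      · show (t : ℝ)⁻¹ • S t
          = (t : ℂ)⁻¹ • (e t • (w t - x) + c • ∫ s in (0:ℝ)..t, e s • (u s - x))
        rw [hS, hwu t ht]
        rw [show ((t : ℂ)⁻¹ : ℂ) = ((t⁻¹ : ℝ) : ℂ) by push_cast; ring]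
        rw [Complex.coe_smul]
    rw [heq]
    exact hsm
  -- the limit of the second component
  have hSdecomp : ∀ t : ℝ, 0 ≤ t → (t : ℝ)⁻¹ • S t
      = (t : ℝ)⁻¹ • (e t • (u t - x)) + c • ((t : ℝ)⁻¹ • ∫ s in (0:ℝ)..t, e s • u s)
        - (t : ℝ)⁻¹ • ((1 - e t) • x) := by
    intro t ht
    have hcongr1 : (∫ s in (0:ℝ)..t, e s • u s) = ∫ s in (0:ℝ)..t, e s • w s := by
      apply intervalIntegral.integral_congr
      intro s hs
      rw [Set.uIcc_of_le ht] at hs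
      simp only [hwu s hs.1]
    have hcongr2 : (∫ s in (0:ℝ)..t, e s • (u s - x)) = ∫ s in (0:ℝ)..t, e s • (w s - x) := by
      apply intervalIntegral.integral_congr
      intro s hs
      rw [Set.uIcc_of_le ht] at hs
      simp only [hwu s hs.1]
    have hsub : (∫ s in (0:ℝ)..t, e s • (w s - x))
        = (∫ s in (0:ℝ)..t, e s • w s) - (∫ s in (0:ℝ)..t, e s) • x := by
      rw [← intervalIntegral.integral_smul_const]
      rw [← intervalIntegral.integral_sub (f := fun s => e s • w s) (g := fun s => e s • x) ((hecont.smul hwcont).intervalIntegrable _ _)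
        ((hecont.smul continuous_const).intervalIntegrable _ _)]
      congr 1
      funext s
      rw [smul_sub]
    simp only [hS]
    rw [hcongr1, hcongr2, hsub]
    have hx2 : c • ((∫ s in (0:ℝ)..t, e s • w s) - (∫ s in (0:ℝ)..t, e s) • x)
        = c • (∫ s in (0:ℝ)..t, e s • w s) - (1 - e t) • x := by
      rw [smul_sub, smul_smul, hce t]
    rw [hx2]
    rw [smul_add (t:ℝ)⁻¹ (e t • (u t - x))]
    rw [smul_sub (t:ℝ)⁻¹ (c • ∫ s in (0:ℝ)..t, e s • w s) ((1 - e t) • x)]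
    rw [smul_comm (t:ℝ)⁻¹ c]
    rw [add_sub_assoc]
  have hT1 : Tendsto (fun t : ℝ => (t : ℝ)⁻¹ • (e t • (u t - x))) atTop (𝓝 0) := by
    apply squeeze_zero_norm' (a := fun t : ℝ => t⁻¹ * (M + ‖x‖))
    · filter_upwards [eventually_ge_atTop (0:ℝ)] with t ht
      rw [norm_smul, norm_smul, hnorme t, one_mul, norm_inv, Real.norm_eq_abs, abs_of_nonneg ht]
      apply mul_le_mul_of_nonneg_left _ (inv_nonneg.2 ht)
      calc ‖u t - x‖ ≤ ‖u t‖ + ‖x‖ := norm_sub_le _ _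
        _ ≤ M + ‖x‖ := by linarith [hM t ht]
    · simpa using tendsto_inv_atTop_zero.mul_const (M + ‖x‖)
  have hT3 : Tendsto (fun t : ℝ => (t : ℝ)⁻¹ • ((1 - e t) • x)) atTop (𝓝 0) := by
    apply squeeze_zero_norm' (a := fun t : ℝ => t⁻¹ * (2 * ‖x‖))
    · filter_upwards [eventually_ge_atTop (0:ℝ)] with t ht
      rw [norm_smul, norm_smul, norm_inv, Real.norm_eq_abs, abs_of_nonneg ht]
      apply mul_le_mul_of_nonneg_left _ (inv_nonneg.2 ht)
      apply mul_le_mul_of_nonneg_right _ (norm_nonneg x)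
      calc ‖(1 : ℂ) - e t‖ ≤ ‖(1 : ℂ)‖ + ‖e t‖ := norm_sub_le _ _
        _ = 2 := by rw [hnorme t, norm_one]; norm_num
    · simpa using tendsto_inv_atTop_zero.mul_const (2 * ‖x‖)
  have hT2 : Tendsto (fun t : ℝ => c • ((t : ℝ)⁻¹ • ∫ s in (0:ℝ)..t, e s • u s))
      atTop (𝓝 (c • P)) := hP.const_smul c
  have hSlim : Tendsto (fun t : ℝ => (t : ℝ)⁻¹ • S t) atTop (𝓝 (c • P)) := by
    have h0 : Tendsto (fun t : ℝ => (t : ℝ)⁻¹ • (e t • (u t - x))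
        + c • ((t : ℝ)⁻¹ • ∫ s in (0:ℝ)..t, e s • u s)
        - (t : ℝ)⁻¹ • ((1 - e t) • x)) atTop (𝓝 (0 + c • P - 0)) :=
      (hT1.add hT2).sub hT3
    rw [zero_add, sub_zero] at h0
    apply h0.congr'
    filter_upwards [eventually_ge_atTop (0:ℝ)] with t ht
    rw [hSdecomp t ht]
  -- conclude using closedness
  have hpair : Tendsto (fun t : ℝ =>
      (((t : ℝ)⁻¹ • ∫ s in (0:ℝ)..t, e s • u s, (t : ℝ)⁻¹ • S t) : E × E))
      atTop (𝓝 (P, c • P)) := hP.prodMk_nhds hSlim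
  have hfinal : ((P, c • P) : E × E) ∈ G := by
    apply hGclosed.mem_of_tendsto hpair
    filter_upwards [eventually_ge_atTop (0:ℝ)] with t ht
    exact hmemb t ht
  rw [hGmem] at hfinal
  exact hfinal
end

section
/- Let u : [0,∞) → E be a bounded continuous function with A∫₀ᵗ(t−s)u(s)ds = u(t) − x for a closed operator A (mild solution of u'' = Au, u(0)=x, u'(0)=0), and suppose ∫₀ᵗ u(s)ds is also bounded in t. If P_r := lim_{t→∞}(1/t)∫₀ᵗ e^{−irs}u(s)ds exists for some r ∈ ℝ, then P_r ∈ D(A) and A P_r = −r² P_r. -/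
open Filter Topology MeasureTheory intervalIntegral

section helpers

variable {F : Type*} [NormedAddCommGroup F] [NormedSpace ℂ F]

lemma aux_integral_mem [CompleteSpace F] (G : Submodule ℂ F) (hG : IsClosed (G : Set F))
    {f : ℝ → F} (hf : Continuous f) (hmem : ∀ s, f s ∈ G) (a b : ℝ) :
    (∫ s in a..b, f s) ∈ G := by
  haveI : CompleteSpace G := hG.completeSpace_coe
  have hg : Continuous (fun s => (⟨f s, hmem s⟩ : G)) := hf.subtype_mk _
  have : (∫ s in a..b, f s) = G.subtypeL (∫ s in a..b, (⟨f s, hmem s⟩ : G)) := by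
    rw [← ContinuousLinearMap.intervalIntegral_comp_comm _ (hg.intervalIntegrable a b)]
    rfl
  rw [this]
  exact (∫ s in a..b, (⟨f s, hmem s⟩ : G)).2

variable {E : Type*} [NormedAddCommGroup E] [NormedSpace ℂ E] [CompleteSpace E]

lemma aux_integral_pair {f g : ℝ → E} (hf : Continuous f) (hg : Continuous g) (a b : ℝ) :
    (∫ s in a..b, (f s, g s)) = ((∫ s in a..b, f s, ∫ s in a..b, g s) : E × E) := by
  have hfg : Continuous (fun s => ((f s, g s) : E × E)) := hf.prodMk hg
  have h1 := (ContinuousLinearMap.fst ℂ E E).intervalIntegral_comp_comm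
    (μ := volume) (a := a) (b := b) (hfg.intervalIntegrable a b)
  have h2 := (ContinuousLinearMap.snd ℂ E E).intervalIntegral_comp_comm
    (μ := volume) (a := a) (b := b) (hfg.intervalIntegrable a b)
  ext
  · simpa using h1.symm
  · simpa using h2.symm

lemma aux_tendsto_zero {E : Type*} [NormedAddCommGroup E] [NormedSpace ℝ E]
    {f : ℝ → E} {C : ℝ} (h : ∀ t : ℝ, 0 ≤ t → ‖f t‖ ≤ C) :
    Tendsto (fun t : ℝ => (t:ℝ)⁻¹ • f t) atTop (𝓝 0) := by
  apply squeeze_zero_norm' (a := fun t : ℝ => t⁻¹ * C)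
  · filter_upwards [eventually_ge_atTop (1:ℝ)] with t ht
    have h0 : (0:ℝ) ≤ t := le_trans zero_le_one ht
    rw [norm_smul, Real.norm_eq_abs, abs_inv, abs_of_nonneg h0]
    exact mul_le_mul_of_nonneg_left (h t h0) (inv_nonneg.2 h0)
  · simpa using tendsto_inv_atTop_zero.mul_const C

end helpers

/-- If `u` is a bounded continuous mild solution of `u'' = Au`, `u(0) = x`, `u'(0) = 0`, for
a closed operator `A`, with `∫₀ᵗ u` also bounded, and the Cesàro mean
`P_r = lim_{t→∞} (1/t)∫₀ᵗ e^{-irs}u(s) ds` exists, then `P_r ∈ D(A)` and `A P_r = -r² P_r`. -/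
theorem stmt17 {E : Type*} [NormedAddCommGroup E] [NormedSpace ℂ E] [CompleteSpace E]
    (D : Submodule ℂ E) (A : D →ₗ[ℂ] E)
    (hclosed : IsClosed {p : E × E | ∃ h : p.1 ∈ D, A ⟨p.1, h⟩ = p.2})
    (x : E) (u : ℝ → E) (hcont : ContinuousOn u (Set.Ici 0))
    (hbdd : ∃ M : ℝ, ∀ t : ℝ, 0 ≤ t → ‖u t‖ ≤ M)
    (hintbdd : ∃ M : ℝ, ∀ t : ℝ, 0 ≤ t → ‖∫ s in (0:ℝ)..t, u s‖ ≤ M)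
    (hmild : ∀ t : ℝ, 0 ≤ t → ∃ h : (∫ s in (0:ℝ)..t, (t - s) • u s) ∈ D,
      A ⟨∫ s in (0:ℝ)..t, (t - s) • u s, h⟩ = u t - x)
    (r : ℝ) (P : E)
    (hP : Tendsto (fun t : ℝ => (t : ℝ)⁻¹ •
      ∫ s in (0:ℝ)..t, Complex.exp (-(Complex.I * r * s)) • u s) atTop (𝓝 P)) :
    ∃ h : P ∈ D, A ⟨P, h⟩ = (-(r : ℂ) ^ 2) • P := by
  obtain ⟨M, hM⟩ := hbdd
  obtain ⟨N, hN⟩ := hintbdd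
  -- the extension of u by u(0) on the left
  set v : ℝ → E := fun s => u (max s 0) with hv_def
  have hmax : Continuous (fun s : ℝ => max s 0) := continuous_id.max continuous_const
  have hvcont : Continuous v :=
    hcont.comp_continuous hmax (fun s => le_max_right s 0)
  have hveq : ∀ s : ℝ, 0 ≤ s → v s = u s := fun s hs => by
    simp only [hv_def, max_eq_left hs]
  have hvbound : ∀ s : ℝ, ‖v s‖ ≤ M := fun s => hM _ (le_max_right _ _)
  set e : ℝ → ℂ := fun s => Complex.exp (-(Complex.I * r * s)) with he_def
  have hecont : Continuous e := by fun_prop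
  have henorm : ∀ s : ℝ, ‖e s‖ = 1 := by
    intro s
    simp [he_def, Complex.norm_exp]
  have hederiv : ∀ t : ℝ, HasDerivAt e (-(Complex.I * r) * e t) t := by
    intro t
    have h1 : HasDerivAt (fun z : ℂ => Complex.exp (-(Complex.I * r * z)))
        (Complex.exp (-(Complex.I * r * t)) * -(Complex.I * r)) (t : ℂ) := by
      simpa [mul_comm] using (((hasDerivAt_id (t : ℂ)).const_mul (Complex.I * r)).neg).cexp
    have := h1.comp_ofReal
    simpa [he_def, mul_comm] using this
  set U : ℝ → E := fun t => ∫ s in (0:ℝ)..t, v s with hU_def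
  have hUderiv : ∀ t : ℝ, HasDerivAt U (v t) t := fun t =>
    (hvcont.integral_hasStrictDerivAt 0 t).hasDerivAt
  have hUcont : Continuous U :=
    continuous_iff_continuousAt.2 fun t => (hUderiv t).continuousAt
  have hUbound : ∀ t : ℝ, 0 ≤ t → ‖U t‖ ≤ N := by
    intro t ht
    have : U t = ∫ s in (0:ℝ)..t, u s := by
      apply integral_congr
      intro s hs
      rw [Set.uIcc_of_le ht] at hs
      exact hveq s hs.1
    rw [this]; exact hN t ht
  set V : ℝ → E := fun t => ∫ s in (0:ℝ)..t, U s with hV_def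
  have hVderiv : ∀ t : ℝ, HasDerivAt V (U t) t := fun t =>
    (hUcont.integral_hasStrictDerivAt 0 t).hasDerivAt
  have hVcont : Continuous V :=
    continuous_iff_continuousAt.2 fun t => (hVderiv t).continuousAt
  -- V t = ∫ (t-s) • v s
  have hVeq : ∀ t : ℝ, (∫ s in (0:ℝ)..t, (t - s) • v s) = V t := by
    intro t
    have key : ∀ τ : ℝ,
        (∫ s in (0:ℝ)..τ, (t - s) • v s) - (t - τ) • U τ - V τ
        = (∫ s in (0:ℝ)..(0:ℝ), (t - s) • v s) - (t - 0) • U 0 - V 0 := by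
      intro τ
      have hD : ∀ τ : ℝ, HasDerivAt
          (fun τ => (∫ s in (0:ℝ)..τ, (t - s) • v s) - (t - τ) • U τ - V τ) 0 τ := by
        intro τ
        have h1 : HasDerivAt (fun τ => ∫ s in (0:ℝ)..τ, (t - s) • v s) ((t - τ) • v τ) τ :=
          (((continuous_const.sub continuous_id).smul hvcont).integral_hasStrictDerivAt
            0 τ).hasDerivAt
        have h2 : HasDerivAt (fun τ : ℝ => (t - τ) • U τ)
            ((t - τ) • v τ + (-1 : ℝ) • U τ) τ :=
          HasDerivAt.fun_smul ((hasDerivAt_id τ).const_sub t) (hUderiv τ)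
        have := (h1.sub h2).sub (hVderiv τ)
        convert this using 1
        · rfl
        simp
      exact is_const_of_deriv_eq_zero
        (fun τ => (hD τ).differentiableAt) (fun τ => (hD τ).deriv) τ 0
    have h := key t
    have hU0 : U 0 = 0 := integral_same
    have hV0 : V 0 = 0 := integral_same
    rw [integral_same, hU0, hV0] at h
    simp only [smul_zero, sub_zero, zero_sub] at h
    have : (∫ s in (0:ℝ)..t, (t - s) • v s) - (t - t) • U t - V t = 0 := by
      rw [h]
    have h2 : (∫ s in (0:ℝ)..t, (t - s) • v s) - V t = 0 := by
      rw [← this]; simp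
    exact sub_eq_zero.mp h2
  set W : ℝ → E := fun t => ∫ s in (0:ℝ)..t, e s • V s with hW_def
  -- main integration-by-parts identity
  have hkey : ∀ t : ℝ, (∫ s in (0:ℝ)..t, e s • v s)
      = e t • U t + ((Complex.I * r) * e t) • V t - ((r:ℂ)^2) • W t := by
    have hI : ∀ t : ℝ, (Complex.I * (r:ℂ)) * (-(Complex.I * (r:ℂ)) * e t) = (r:ℂ)^2 * e t := by
      intro t
      ring_nf
      rw [Complex.I_sq]
      ring
    set w : ℝ → E := fun t => ∫ s in (0:ℝ)..t, e s • v s with hw_def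
    have hwderiv : ∀ t : ℝ, HasDerivAt w (e t • v t) t := fun t =>
      ((hecont.smul hvcont).integral_hasStrictDerivAt 0 t).hasDerivAt
    have hWderiv : ∀ t : ℝ, HasDerivAt W (e t • V t) t := fun t =>
      ((hecont.smul hVcont).integral_hasStrictDerivAt 0 t).hasDerivAt
    intro t
    have key : ∀ τ : ℝ,
        e τ • U τ + ((Complex.I * r) * e τ) • V τ - ((r:ℂ)^2) • W τ - w τ
        = e 0 • U 0 + ((Complex.I * r) * e 0) • V 0 - ((r:ℂ)^2) • W 0 - w 0 := by
      have hD : ∀ τ : ℝ, HasDerivAt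
          (fun τ => e τ • U τ + ((Complex.I * r) * e τ) • V τ - ((r:ℂ)^2) • W τ - w τ) 0 τ := by
        intro τ
        have hA : HasDerivAt (fun τ => e τ • U τ)
            (e τ • v τ + (-(Complex.I * r) * e τ) • U τ) τ :=
          (hederiv τ).smul (hUderiv τ)
        have hB : HasDerivAt (fun τ => ((Complex.I * r) * e τ) • V τ)
            (((Complex.I * r) * e τ) • U τ
              + ((Complex.I * r) * (-(Complex.I * r) * e τ)) • V τ) τ :=
          ((hederiv τ).const_mul (Complex.I * r)).smul (hVderiv τ)
        have hC : HasDerivAt (fun τ => ((r:ℂ)^2) • W τ) (((r:ℂ)^2) • (e τ • V τ)) τ :=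
          (hWderiv τ).const_smul ((r:ℂ)^2)
        have := ((hA.add hB).sub hC).sub (hwderiv τ)
        convert this using 1
        · rfl
        rw [hI τ, smul_smul]
        module
      intro τ
      exact is_const_of_deriv_eq_zero (fun τ => (hD τ).differentiableAt)
        (fun τ => (hD τ).deriv) τ 0
    have h0 : w 0 = 0 := integral_same
    have hW0 : W 0 = 0 := integral_same
    have hU0 : U 0 = 0 := integral_same
    have hV0 : V 0 = 0 := integral_same
    have h := key t
    rw [h0, hW0, hU0, hV0] at h
    simp only [smul_zero, sub_zero, add_zero, zero_add, zero_sub, sub_eq_iff_eq_add] at h ⊢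
    rw [eq_comm, ← sub_eq_zero]
    rw [← sub_eq_zero] at h
    convert h using 1
    abel
  -- limit of (1/t) ∫ e • v
  have hPv : Tendsto (fun t : ℝ => (t:ℝ)⁻¹ • ∫ s in (0:ℝ)..t, e s • v s) atTop (𝓝 P) := by
    apply hP.congr'
    filter_upwards [eventually_ge_atTop (0:ℝ)] with t ht
    congr 1
    apply integral_congr
    intro s hs
    rw [Set.uIcc_of_le ht] at hs
    dsimp only
    rw [hveq s hs.1]
  by_cases hr : r = 0
  · -- r = 0 : P = 0
    subst hr
    have h0 : Tendsto (fun t : ℝ => (t : ℝ)⁻¹ •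
        ∫ s in (0:ℝ)..t, Complex.exp (-(Complex.I * (0:ℝ) * s)) • u s) atTop (𝓝 0) := by
      have hfun : ∀ t : ℝ, (∫ s in (0:ℝ)..t, Complex.exp (-(Complex.I * (0:ℝ) * s)) • u s)
          = ∫ s in (0:ℝ)..t, u s := by
        intro t
        simp
      simp only [hfun]
      exact aux_tendsto_zero hN
    have hP0 : P = 0 := tendsto_nhds_unique hP h0
    subst hP0
    refine ⟨D.zero_mem, ?_⟩
    have h1 : (⟨(0:E), D.zero_mem⟩ : D) = 0 := rfl
    rw [h1, map_zero]
    simp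
  -- r ≠ 0
  set G : Submodule ℂ (E × E) := LinearMap.range ((D.subtype).prod A) with hG_def
  have hSG : {p : E × E | ∃ h : p.1 ∈ D, A ⟨p.1, h⟩ = p.2} = ↑G := by
    ext p
    simp only [Set.mem_setOf_eq, SetLike.mem_coe, hG_def, LinearMap.mem_range,
      LinearMap.prod_apply, Function.prod, Submodule.coe_subtype]
    constructor
    · rintro ⟨h1, h2⟩
      exact ⟨⟨p.1, h1⟩, by rw [h2]⟩
    · rintro ⟨d, rfl⟩
      exact ⟨d.2, by rw [Subtype.coe_eta]⟩
  have hGclosed : IsClosed (G : Set (E × E)) := hSG ▸ hclosed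
  -- (V t, v t - x) ∈ G for t ≥ 0
  have hmemV : ∀ t : ℝ, 0 ≤ t → ((V t, v t - x) : E × E) ∈ G := by
    intro t ht
    obtain ⟨h1, h2⟩ := hmild t ht
    have e1 : (∫ s in (0:ℝ)..t, (t - s) • u s) = V t := by
      rw [← hVeq t]
      apply integral_congr
      intro s hs
      rw [Set.uIcc_of_le ht] at hs
      dsimp only
      rw [hveq s hs.1]
    have e2 : ((V t, v t - x) : E × E)
        = ((∫ s in (0:ℝ)..t, (t - s) • u s), u t - x) := by
      rw [e1, hveq t ht]
    have : ((∫ s in (0:ℝ)..t, (t - s) • u s, u t - x) : E × E) ∈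
        {p : E × E | ∃ h : p.1 ∈ D, A ⟨p.1, h⟩ = p.2} := ⟨h1, h2⟩
    rw [hSG] at this
    rw [e2]
    exact this
  set Y : ℝ → E := fun t => ∫ s in (0:ℝ)..t, e s • (v s - x) with hY_def
  -- (W t, Y t) ∈ G for t ≥ 0
  have hWYmem : ∀ t : ℝ, 0 ≤ t → ((W t, Y t) : E × E) ∈ G := by
    intro t ht
    have c1 : Continuous (fun s : ℝ => e (max s 0) • V (max s 0)) :=
      (hecont.comp hmax).smul (hVcont.comp hmax)
    have c2 : Continuous (fun s : ℝ => e (max s 0) • (v (max s 0) - x)) :=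
      (hecont.comp hmax).smul ((hvcont.comp hmax).sub continuous_const)
    have hFcont : Continuous (fun s : ℝ =>
        e (max s 0) • ((V (max s 0), v (max s 0) - x) : E × E)) :=
      (hecont.comp hmax).smul ((hVcont.comp hmax).prodMk
        ((hvcont.comp hmax).sub continuous_const))
    have hFmem : ∀ s : ℝ,
        e (max s 0) • ((V (max s 0), v (max s 0) - x) : E × E) ∈ G :=
      fun s => G.smul_mem _ (hmemV _ (le_max_right _ _))
    have hm := aux_integral_mem G hGclosed hFcont hFmem 0 t
    have h1 : (∫ s in (0:ℝ)..t, e (max s 0) • ((V (max s 0), v (max s 0) - x) : E × E))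
        = (∫ s in (0:ℝ)..t, ((e (max s 0) • V (max s 0),
            e (max s 0) • (v (max s 0) - x)) : E × E)) := rfl
    rw [h1, aux_integral_pair c1 c2 0 t] at hm
    convert hm using 2
    · apply integral_congr
      intro s hs
      rw [Set.uIcc_of_le ht] at hs
      dsimp only
      rw [max_eq_left hs.1]
    · apply integral_congr
      intro s hs
      rw [Set.uIcc_of_le ht] at hs
      dsimp only
      rw [max_eq_left hs.1]
  -- membership of the scaled combination
  have hZmem : ∀ t : ℝ, 0 ≤ t → (t:ℝ)⁻¹ • (((Complex.I * r) * e t) • ((V t, v t - x) : E × E)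
      - ((r:ℂ)^2) • ((W t, Y t) : E × E)) ∈ G := by
    intro t ht
    have hin : ((Complex.I * r) * e t) • ((V t, v t - x) : E × E)
        - ((r:ℂ)^2) • ((W t, Y t) : E × E) ∈ G :=
      G.sub_mem (G.smul_mem _ (hmemV t ht)) (G.smul_mem _ (hWYmem t ht))
    rw [← algebraMap_smul ℂ ((t:ℝ)⁻¹)]
    exact G.smul_mem _ hin
  -- rewrite the pair
  have hq : ∀ t : ℝ, 0 ≤ t →
      (((t:ℝ)⁻¹ • ((∫ s in (0:ℝ)..t, e s • v s) - e t • U t),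
        (t:ℝ)⁻¹ • (((Complex.I * r) * e t) • (v t - x) - ((r:ℂ)^2) • Y t)) : E × E)
      = (t:ℝ)⁻¹ • (((Complex.I * r) * e t) • ((V t, v t - x) : E × E)
          - ((r:ℂ)^2) • ((W t, Y t) : E × E)) := by
    intro t ht
    have h1 : (∫ s in (0:ℝ)..t, e s • v s) - e t • U t
        = ((Complex.I * r) * e t) • V t - ((r:ℂ)^2) • W t := by
      rw [hkey t]; abel
    simp only [Prod.smul_mk, Prod.mk_sub_mk]
    rw [h1]
  -- limits
  have hfst : Tendsto (fun t : ℝ => (t:ℝ)⁻¹ • ((∫ s in (0:ℝ)..t, e s • v s) - e t • U t))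
      atTop (𝓝 P) := by
    simp only [smul_sub]
    have l2 : Tendsto (fun t : ℝ => (t:ℝ)⁻¹ • (e t • U t)) atTop (𝓝 0) := by
      apply aux_tendsto_zero (C := N)
      intro t ht
      rw [norm_smul, henorm, one_mul]
      exact hUbound t ht
    simpa using hPv.sub l2
  have hYlim : Tendsto (fun t : ℝ => (t:ℝ)⁻¹ • Y t) atTop (𝓝 P) := by
    -- bound on ∫ e
    have hrpos : 0 < |r| := abs_pos.mpr hr
    have hIr : -(Complex.I * (r:ℂ)) ≠ 0 := by
      simp [Complex.I_ne_zero, Complex.ofReal_ne_zero.mpr hr]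
    have hcbound : ∀ t : ℝ, ‖(∫ s in (0:ℝ)..t, e s)‖ ≤ 2 / |r| := by
      intro t
      have hFd : ∀ s : ℝ, HasDerivAt (fun s => e s / (-(Complex.I * r))) (e s) s := by
        intro s
        have h := (hederiv s).div_const (-(Complex.I * r))
        have : -(Complex.I * (r:ℂ)) * e s / -(Complex.I * (r:ℂ)) = e s :=
          mul_div_cancel_left₀ _ hIr
        rwa [this] at h
      have hint : (∫ s in (0:ℝ)..t, e s)
          = e t / (-(Complex.I * r)) - e 0 / (-(Complex.I * r)) :=
        integral_eq_sub_of_hasDerivAt (fun s _ => hFd s) (hecont.intervalIntegrable 0 t)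
      rw [hint, div_sub_div_same, norm_div]
      have hnum : ‖e t - e 0‖ ≤ 2 := by
        calc ‖e t - e 0‖ ≤ ‖e t‖ + ‖e 0‖ := norm_sub_le _ _
        _ = 2 := by rw [henorm, henorm]; norm_num
      have hden : ‖-(Complex.I * (r:ℂ))‖ = |r| := by
        simp [norm_mul]
      rw [hden]
      gcongr
    -- Y t = (∫ e • v) - (∫ e) • x
    have hYeq : ∀ t : ℝ, Y t = (∫ s in (0:ℝ)..t, e s • v s) - (∫ s in (0:ℝ)..t, e s) • x := by
      intro t
      rw [hY_def]
      dsimp only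
      rw [← intervalIntegral.integral_smul_const]
      rw [← integral_sub (f := fun s => e s • v s) (g := fun s => e s • x) ((hecont.smul hvcont).intervalIntegrable 0 t)
        ((hecont.smul continuous_const).intervalIntegrable 0 t)]
      apply integral_congr
      intro s _
      dsimp only
      rw [smul_sub]
    have l2 : Tendsto (fun t : ℝ => (t:ℝ)⁻¹ • ((∫ s in (0:ℝ)..t, e s) • x)) atTop (𝓝 0) := by
      apply aux_tendsto_zero (C := (2 / |r|) * ‖x‖)
      intro t _
      rw [norm_smul]
      exact mul_le_mul_of_nonneg_right (hcbound t) (norm_nonneg x)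
    have : Tendsto (fun t : ℝ => (t:ℝ)⁻¹ • ((∫ s in (0:ℝ)..t, e s • v s)
        - (∫ s in (0:ℝ)..t, e s) • x)) atTop (𝓝 P) := by
      simp only [smul_sub]
      simpa using hPv.sub l2
    apply this.congr
    intro t
    rw [hYeq t]
  have hsnd : Tendsto (fun t : ℝ =>
      (t:ℝ)⁻¹ • (((Complex.I * r) * e t) • (v t - x) - ((r:ℂ)^2) • Y t))
      atTop (𝓝 ((-(r:ℂ)^2) • P)) := by
    have l1 : Tendsto (fun t : ℝ => (t:ℝ)⁻¹ • (((Complex.I * r) * e t) • (v t - x)))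
        atTop (𝓝 0) := by
      apply aux_tendsto_zero (C := |r| * (M + ‖x‖))
      intro t ht
      rw [norm_smul]
      have h1 : ‖(Complex.I * (r:ℂ)) * e t‖ = |r| := by
        rw [norm_mul, norm_mul, henorm]
        simp
      have h2 : ‖v t - x‖ ≤ M + ‖x‖ :=
        (norm_sub_le _ _).trans (add_le_add_left (hvbound t) _)
      rw [h1]
      have hr0 : (0:ℝ) ≤ |r| := abs_nonneg r
      exact mul_le_mul_of_nonneg_left h2 hr0
    have l2 : Tendsto (fun t : ℝ => (t:ℝ)⁻¹ • (((r:ℂ)^2) • Y t))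
        atTop (𝓝 (((r:ℂ)^2) • P)) := by
      have hcomm : (fun t : ℝ => (t:ℝ)⁻¹ • (((r:ℂ)^2) • Y t))
          = fun t : ℝ => ((r:ℂ)^2) • ((t:ℝ)⁻¹ • Y t) := by
        funext t
        exact smul_comm _ _ _
      rw [hcomm]
      exact hYlim.const_smul ((r:ℂ)^2)
    have h := l1.sub l2
    rw [zero_sub] at h
    have h2 := h.congr (fun t => (smul_sub ((t:ℝ)⁻¹) _ _).symm)
    have h3 : (-(r:ℂ)^2) • P = -(((r:ℂ)^2) • P) := by rw [neg_smul]
    rw [h3]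
    exact h2
  -- conclude via closedness
  have hlim : Tendsto (fun t : ℝ =>
      (((t:ℝ)⁻¹ • ((∫ s in (0:ℝ)..t, e s • v s) - e t • U t),
        (t:ℝ)⁻¹ • (((Complex.I * r) * e t) • (v t - x) - ((r:ℂ)^2) • Y t)) : E × E))
      atTop (𝓝 ((P, (-(r:ℂ)^2) • P) : E × E)) :=
    hfst.prodMk_nhds hsnd
  have hmemF : ∀ᶠ t : ℝ in atTop,
      (((t:ℝ)⁻¹ • ((∫ s in (0:ℝ)..t, e s • v s) - e t • U t),
        (t:ℝ)⁻¹ • (((Complex.I * r) * e t) • (v t - x) - ((r:ℂ)^2) • Y t)) : E × E)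
      ∈ (G : Set (E × E)) := by
    filter_upwards [eventually_ge_atTop (0:ℝ)] with t ht
    rw [hq t ht]
    exact hZmem t ht
  have hfinal : ((P, (-(r:ℂ)^2) • P) : E × E) ∈ (G : Set (E × E)) :=
    hGclosed.mem_of_tendsto hlim hmemF
  rw [← hSG] at hfinal
  exact hfinal
end

section
/- If f : [0,∞) → E is almost periodic and s ≤ 0, then the value of the almost periodic extension (Ff)(s) belongs to the closure of {f(r) : r ≥ 0}. -/
/-- For `s ≤ 0`, the value `(Ff)(s)` of the almost periodic extension of `f` lies in the
closure of `{f(r) : r ≥ 0}`. -/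
theorem stmt18 {E : Type*} [NormedAddCommGroup E] [NormedSpace ℝ E] [CompleteSpace E]
    (f : ℝ → E) (hf : APHalf f) (F : ℝ → E) (hF : AlmostPeriodic F)
    (hext : ∀ t : ℝ, 0 ≤ t → F t = f t) (s : ℝ) (hs : s ≤ 0) :
    F s ∈ closure (f '' Set.Ici 0) := by
  rw [Metric.mem_closure_iff]
  intro ε hε
  obtain ⟨l, hl, h⟩ := hF.2 (ε / 2) (by linarith)
  obtain ⟨τ, hτ, hper⟩ := h (-s + 1)
  have hsτ : 0 ≤ s + τ := by
    have := hτ.1; linarith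
  refine ⟨f (s + τ), ⟨s + τ, hsτ, rfl⟩, ?_⟩
  rw [dist_eq_norm, ← hext _ hsτ, ← norm_neg]
  calc ‖-(F s - F (s + τ))‖ = ‖F (s + τ) - F s‖ := by rw [neg_sub]
    _ ≤ ε / 2 := hper s
    _ < ε := by linarith
end
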